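/- arXiv:1811.07890 — 10 statements merged into one kernel-verified Lean document; each statement's English description precedes it below -/
import Mathlib

section
/- The set F_1 has exactly 2q_0^3 elements. -/
/-- `q₀ = 2^s`. -/
def q0 (s : ℕ) : ℕ := 2 ^ s

/-- `q = 2 q₀²`. -/
def qS (s : ℕ) : ℕ := 2 * q0 s ^ 2

/-- `m_{j,k,ℓ} = ⌈(q₀/(q₀−1))·(j + k + ℓ − (k+ℓ)/q)⌉`. -/
def mval (s j k l : ℕ) : ℤ :=
  ⌈((q0 s : ℚ) / ((q0 s : ℚ) - 1)) *
    ((j : ℚ) + (k : ℚ) + (l : ℚ) - ((k : ℚ) + (l : ℚ)) / (qS s : ℚ))⌉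

/-- `F₁ = { hq − (ℓ+2k)q₀ − j : ℓ ∈ {0,1}, k,j ∈ {0,…,q₀−1},
    h ∈ {max{1, m_{j,k,ℓ}},…,2q₀} }`. -/
def F1 (s : ℕ) : Set ℕ :=
  {n | ∃ h j k l : ℕ, l ≤ 1 ∧ k < q0 s ∧ j < q0 s ∧
    max 1 (mval s j k l) ≤ (h : ℤ) ∧ h ≤ 2 * q0 s ∧
    n = h * qS s - (l + 2 * k) * q0 s - j}

/-- `F₂ = { hq − (2h−2q₀−1)q₀ − (q₀−1) : h ∈ {q₀+1,…,2q₀} }`. -/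
def F2 (s : ℕ) : Set ℕ :=
  {n | ∃ h : ℕ, q0 s + 1 ≤ h ∧ h ≤ 2 * q0 s ∧
    n = h * qS s - (2 * h - 2 * q0 s - 1) * q0 s - (q0 s - 1)}

/-- `G₁ = { hq − kq₀ − ⌊(2h−k−2)/2⌋ : h ∈ {1,…,q₀}, k ∈ {0,…,2h−2} }`. -/
def G1 (s : ℕ) : Set ℕ :=
  {n | ∃ h k : ℕ, 1 ≤ h ∧ h ≤ q0 s ∧ k ≤ 2 * h - 2 ∧
    n = h * qS s - k * q0 s - (2 * h - k - 2) / 2}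

/-!
Write `Q = q₀` and `t = j + k + ℓ`. Since `0 ≤ (k + ℓ)/(2Q) < 1`, the ceiling condition
`m_{j,k,ℓ} ≤ h` is the integral inequality `Q t ≤ (Q - 1) h`. The reflection
`(h, j, k, ℓ) ↦ (2Q + 1 - h, Q - 1 - j, Q - 1 - k, 1 - ℓ)` of the box
`[1, 2Q] × [0, Q) × [0, Q) × {0, 1}` sends `t` to `2Q - 1 - t` and turns this inequality into its
negation, so exactly half of the `4Q³` parameters are admissible. Distinct admissible parameters
give distinct elements of `F₁`, because `(ℓ + 2k) Q + j < q` are base-`Q` digits.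
-/

open Finset

lemma two_mul_card_filter_eq_card_of_involution {α : Type*} (s : Finset α) (p : α → Prop)
    [DecidablePred p] (σ : α → α) (hσ : ∀ x ∈ s, σ x ∈ s) (hσσ : ∀ x ∈ s, σ (σ x) = x)
    (hp : ∀ x ∈ s, p (σ x) ↔ ¬ p x) :
    2 * #(s.filter p) = #s := by
  have hswap : #(s.filter p) = #(s.filter fun x ↦ ¬ p x) := by
    refine card_nbij' σ σ ?_ ?_ (fun x hx ↦ hσσ x (mem_filter.1 hx).1)
      (fun x hx ↦ hσσ x (mem_filter.1 hx).1) <;>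
    · intro x hx
      obtain ⟨hxs, hpx⟩ := mem_filter.1 hx
      exact mem_filter.2 ⟨hσ x hxs, by simpa [hp x hxs] using hpx⟩
  have hsplit := card_filter_add_card_filter_not (s := s) p
  omega

lemma eq_and_eq_of_add_mul_eq {b a a' c c' : ℕ} (ha : a < b) (ha' : a' < b)
    (h : a + b * c = a' + b * c') : a = a' ∧ c = c' := by
  have hb : 0 < b := by omega
  obtain ⟨hdiv, hmod⟩ := (Nat.div_mod_unique hb).2 ⟨h, ha⟩
  rw [Nat.add_comm, Nat.mul_add_div hb, Nat.div_eq_of_lt ha', Nat.add_zero] at hdiv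
  rw [Nat.add_comm, Nat.mul_add_mod, Nat.mod_eq_of_lt ha'] at hmod
  exact ⟨hmod.symm, hdiv.symm⟩

lemma q0_two_le {s : ℕ} (hs : 1 ≤ s) : 2 ≤ q0 s :=
  Nat.le_self_pow (by omega) 2

lemma mval_le_iff {s j k l : ℕ} (hs : 1 ≤ s) (hkl : k + l ≤ q0 s) (h : ℕ) :
    mval s j k l ≤ h ↔ q0 s * (j + k + l) + h ≤ q0 s * h := by
  have hQ : (2 : ℚ) ≤ q0 s := by exact_mod_cast q0_two_le hs
  have hkl' : ((k + l : ℕ) : ℚ) ≤ q0 s := by exact_mod_cast hkl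
  have hD : (0 : ℚ) < 2 * q0 s * (q0 s - 1) := by nlinarith
  have hval : ((q0 s : ℚ) / (q0 s - 1)) * (j + k + l - (k + l) / (qS s : ℚ)) =
      (2 * q0 s ^ 2 * (j + k + l) - (k + l)) / (2 * q0 s * (q0 s - 1)) := by
    rw [qS]; push_cast; field_simp
  rw [mval, Int.ceil_le, hval, Int.cast_natCast, div_le_iff₀ hD]
  push_cast at hkl'
  constructor
  · intro hle
    by_contra hlt
    -- integrality: `Q t - (Q - 1) h ≥ 1` would exceed the correction `(k + l)/(2Q) < 1`
    have hlt' : (q0 s : ℚ) * h + 1 ≤ q0 s * (j + k + l) + h := by exact_mod_cast not_le.1 hlt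
    nlinarith
  · intro hle
    have hle' : (q0 s : ℚ) * (j + k + l) + h ≤ q0 s * h := by exact_mod_cast hle
    nlinarith

/-- Parameter tuples `(h, j, k, ℓ)` in the notation of `F₁`. -/
def F1Box (s : ℕ) : Finset (ℕ × ℕ × ℕ × ℕ) :=
  Icc 1 (2 * q0 s) ×ˢ range (q0 s) ×ˢ range (q0 s) ×ˢ range 2

def F1Index (s : ℕ) : Finset (ℕ × ℕ × ℕ × ℕ) :=
  (F1Box s).filter fun x ↦ q0 s * (x.2.1 + x.2.2.1 + x.2.2.2) + x.1 ≤ q0 s * x.1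

def F1Value (s : ℕ) (x : ℕ × ℕ × ℕ × ℕ) : ℕ :=
  x.1 * qS s - (x.2.2.2 + 2 * x.2.2.1) * q0 s - x.2.1

lemma card_F1Box (s : ℕ) : #(F1Box s) = 4 * q0 s ^ 3 := by
  simp only [F1Box, card_product, Nat.card_Icc, Nat.add_sub_cancel, card_range]
  ring

lemma F1_eq_image {s : ℕ} (hs : 1 ≤ s) : F1 s = (F1Index s).image (F1Value s) := by
  ext n
  simp only [F1, F1Index, F1Box, F1Value, Set.mem_ofPred_eq, coe_image, Set.mem_image, coe_filter,
    mem_product, mem_Icc, mem_range, Prod.exists]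
  constructor
  · rintro ⟨h, j, k, l, hl, hk, hj, hm, hh, rfl⟩
    rw [max_le_iff, mval_le_iff hs (by omega)] at hm
    exact ⟨h, j, k, l, ⟨⟨⟨by omega, hh⟩, hj, hk, by omega⟩, hm.2⟩, rfl⟩
  · rintro ⟨h, j, k, l, ⟨⟨⟨h1, hh⟩, hj, hk, hl⟩, hm⟩, rfl⟩
    refine ⟨h, j, k, l, by omega, hk, hj, ?_, hh, rfl⟩
    rw [max_le_iff, mval_le_iff hs (by omega)]
    exact ⟨by omega, hm⟩

lemma F1Value_injOn {s : ℕ} : Set.InjOn (F1Value s) (F1Box s) := by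
  rintro ⟨h, j, k, l⟩ hx ⟨h', j', k', l'⟩ hx' he
  simp only [F1Box, coe_product, Set.mem_prod, coe_Icc, Set.mem_Icc, coe_range,
    Set.mem_Iio] at hx hx'
  obtain ⟨⟨h1, -⟩, hj, hk, hl⟩ := hx
  obtain ⟨⟨h1', -⟩, hj', hk', hl'⟩ := hx'
  have hdigits : ∀ {j k l : ℕ}, j < q0 s → k < q0 s → l < 2 → j + q0 s * (l + 2 * k) < qS s :=
    fun {j k l} hj hk hl ↦ by rw [qS]; nlinarith
  have hr := hdigits hj hk hl
  have hr' := hdigits hj' hk' hl'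
  have hsplit : ∀ {h : ℕ}, 1 ≤ h → h * qS s = qS s + qS s * (h - 1) := fun {h} hh ↦ by
    obtain ⟨a, rfl⟩ : ∃ a, h = a + 1 := ⟨h - 1, by omega⟩
    rw [Nat.add_sub_cancel]; ring
  simp only [F1Value, Nat.sub_sub, hsplit h1, hsplit h1'] at he
  rw [mul_comm (l + 2 * k), mul_comm (l' + 2 * k')] at he
  -- `h q - r = (q - 1 - r) + q (h - 1) + 1` and `q - 1 - r < q`
  obtain ⟨hrem, hh⟩ := eq_and_eq_of_add_mul_eq (b := qS s)
    (a := qS s - 1 - (j + q0 s * (l + 2 * k))) (a' := qS s - 1 - (j' + q0 s * (l' + 2 * k')))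
    (c := h - 1) (c' := h' - 1) (by omega) (by omega) (by omega)
  obtain ⟨rfl, hkl⟩ :=
    eq_and_eq_of_add_mul_eq (c := l + 2 * k) (c' := l' + 2 * k') hj hj' (by omega)
  simp only [Prod.mk.injEq, true_and]
  refine ⟨?_, ?_, ?_⟩ <;> omega

def F1Reflect (s : ℕ) (x : ℕ × ℕ × ℕ × ℕ) : ℕ × ℕ × ℕ × ℕ :=
  (2 * q0 s + 1 - x.1, q0 s - 1 - x.2.1, q0 s - 1 - x.2.2.1, 1 - x.2.2.2)

lemma two_mul_card_F1Index (s : ℕ) : 2 * #(F1Index s) = #(F1Box s) := by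
  have hbox : ∀ {h j k l : ℕ}, (h, j, k, l) ∈ F1Box s ↔
      1 ≤ h ∧ h ≤ 2 * q0 s ∧ j < q0 s ∧ k < q0 s ∧ l < 2 := by
    simp [F1Box, and_assoc]
  refine two_mul_card_filter_eq_card_of_involution _ _ (F1Reflect s) ?_ ?_ ?_ <;>
    rintro ⟨h, j, k, l⟩ hx <;> rw [hbox] at hx <;> simp only [F1Reflect]
  · rw [hbox]; omega
  · simp only [Prod.mk.injEq]; refine ⟨?_, ?_, ?_, ?_⟩ <;> omega
  · obtain ⟨h', hh⟩ : ∃ h', h + h' = 2 * q0 s + 1 := ⟨_, Nat.add_sub_of_le (by omega)⟩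
    obtain ⟨t', ht⟩ : ∃ t', (j + k + l) + t' = 2 * q0 s - 1 := ⟨_, Nat.add_sub_of_le (by omega)⟩
    have hsum : q0 s - 1 - j + (q0 s - 1 - k) + (1 - l) = t' := by omega
    rw [show 2 * q0 s + 1 - h = h' by omega, hsum, not_le]
    have hQh : q0 s * h + q0 s * h' = 2 * (q0 s * q0 s) + q0 s := by
      rw [← mul_add, hh]; ring
    have hQt : q0 s * (j + k + l) + q0 s * t' + q0 s = 2 * (q0 s * q0 s) := by
      rw [← mul_add, ht, ← Nat.mul_succ, Nat.succ_eq_add_one, Nat.sub_add_cancel (by omega)]; ring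
    omega

/-- `|F₁| = 2 q₀³`. -/
theorem stmt2 (s : ℕ) (hs : 1 ≤ s) :
    (F1 s).ncard = 2 * q0 s ^ 3 := by
  have hinj : Set.InjOn (F1Value s) (F1Index s) :=
    F1Value_injOn.mono (coe_subset.2 (filter_subset _ _))
  have hhalf := two_mul_card_F1Index s
  rw [card_F1Box] at hhalf
  rw [F1_eq_image hs, Set.ncard_coe_finset, card_image_of_injOn hinj]
  omega
end

section
/- The number of elements of F_1 lying in the interval [1, 2g−1] is exactly 2q_0^3 − 2q_0 − 1, where g = q_0(q−1). -/
open Finset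

namespace S3

lemma hq2 {s : ℕ} (hs : 1 ≤ s) : 2 ≤ q0 s := by
  have : 2 ^ 1 ≤ 2 ^ s := Nat.pow_le_pow_right (by norm_num) hs
  simpa [q0] using this

lemma hQval (s : ℕ) : qS s = 2 * (q0 s * q0 s) := by rw [qS]; ring

/-- decoding lemma -/
lemma decode {Q a1 a2 j1 j2 : ℕ} (hQ : 0 < Q) (h1 : j1 < Q) (h2 : j2 < Q)
    (e : a1 * Q + j1 = a2 * Q + j2) : a1 = a2 ∧ j1 = j2 := by
  have d1 : (a1 * Q + j1) / Q = a1 := by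
    rw [add_comm, Nat.add_mul_div_right _ _ hQ, Nat.div_eq_of_lt h1, Nat.zero_add]
  have d2 : (a2 * Q + j2) / Q = a2 := by
    rw [add_comm, Nat.add_mul_div_right _ _ hQ, Nat.div_eq_of_lt h2, Nat.zero_add]
  have ha : a1 = a2 := by rw [← d1, ← d2, e]
  subst ha
  exact ⟨rfl, by omega⟩

/-- the key bridge: `mval ≤ h` iff the integer inequality. -/
lemma mval_le_iff {s : ℕ} (hs : 1 ≤ s) (h j k l : ℕ) (hk : k < q0 s) (hl : l ≤ 1) :
    mval s j k l ≤ (h : ℤ) ↔ q0 s * (j + k + l) ≤ (q0 s - 1) * h := by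
  have h2 : 2 ≤ q0 s := hq2 hs
  have h1q : (0:ℚ) < (q0 s : ℚ) - 1 := by
    have : (2:ℚ) ≤ (q0 s : ℚ) := by exact_mod_cast h2
    linarith
  have hQpos : (0:ℚ) < (qS s : ℚ) := by
    have : 0 < qS s := by rw [hQval]; nlinarith
    exact_mod_cast this
  have hd0 : (0:ℚ) ≤ ((k:ℚ) + l) / (qS s : ℚ) := by positivity
  have hd1 : ((k:ℚ) + l) / (qS s : ℚ) * (q0 s : ℚ) < 1 := by
    rw [div_mul_eq_mul_div, div_lt_one hQpos]
    have hkl : ((k:ℚ) + l) ≤ (q0 s : ℚ) := by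
      have : k + l ≤ q0 s := by omega
      exact_mod_cast this
    have hcast : (qS s : ℚ) = 2 * ((q0 s : ℚ) * (q0 s : ℚ)) := by
      rw [hQval]; push_cast; ring
    rw [hcast]
    nlinarith
  rw [mval, Int.ceil_le, div_mul_eq_mul_div, div_le_iff₀ h1q]
  push_cast
  constructor
  · intro hle
    have key : ((q0 s * (j + k + l) : ℕ) : ℚ) < (((q0 s - 1) * h : ℕ) : ℚ) + 1 := by
      push_cast [Nat.cast_sub (show 1 ≤ q0 s by omega)]
      nlinarith
    have : q0 s * (j + k + l) < (q0 s - 1) * h + 1 := by exact_mod_cast key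
    omega
  · intro hle
    have key : ((q0 s * (j + k + l) : ℕ) : ℚ) ≤ (((q0 s - 1) * h : ℕ) : ℚ) := by
      exact_mod_cast hle
    push_cast [Nat.cast_sub (show 1 ≤ q0 s by omega)] at key
    nlinarith

end S3

namespace S3

lemma flip {q j k l h : ℕ} (h2 : 2 ≤ q) (hj : j < q) (hk : k < q) (hl : l < 2) (hh : h ≤ 2*q+1) :
    (q * ((q - 1 - j) + (q - 1 - k) + (1 - l)) ≤ (q - 1) * (2 * q + 1 - h))
      ↔ ¬ (q * (j + k + l) ≤ (q - 1) * h) := by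
  have e1 : ((q - 1 - j) + (q - 1 - k) + (1 - l) : ℕ) = 2*q - 1 - (j+k+l) := by omega
  rw [e1, not_le, ← Nat.add_one_le_iff]
  zify [show j+k+l ≤ 2*q-1 by omega, show 1 ≤ 2*q by omega, show 1 ≤ q by omega, hh]
  constructor <;> intro H <;> nlinarith [H]

def US (s : ℕ) : Finset (ℕ × ℕ × ℕ × ℕ) :=
  Finset.Icc 1 (2 * q0 s) ×ˢ Finset.range (q0 s) ×ˢ Finset.range (q0 s) ×ˢ Finset.range 2

lemma mem_US {s h j k l : ℕ} :
    ((h, j, k, l) : ℕ × ℕ × ℕ × ℕ) ∈ US s ↔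
      (1 ≤ h ∧ h ≤ 2 * q0 s) ∧ j < q0 s ∧ k < q0 s ∧ l < 2 := by
  simp [US, Finset.mem_Icc, Finset.mem_range, and_assoc]

def GS (s : ℕ) : Finset (ℕ × ℕ × ℕ × ℕ) :=
  (US s).filter (fun x => q0 s * (x.2.1 + x.2.2.1 + x.2.2.2) ≤ (q0 s - 1) * x.1)

def BS (s : ℕ) : Finset (ℕ × ℕ × ℕ × ℕ) :=
  (US s).filter (fun x => ¬ (q0 s * (x.2.1 + x.2.2.1 + x.2.2.2) ≤ (q0 s - 1) * x.1))

lemma mem_GS {s h j k l : ℕ} :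
    ((h, j, k, l) : ℕ × ℕ × ℕ × ℕ) ∈ GS s ↔
      ((1 ≤ h ∧ h ≤ 2 * q0 s) ∧ j < q0 s ∧ k < q0 s ∧ l < 2) ∧
        q0 s * (j + k + l) ≤ (q0 s - 1) * h := by
  rw [GS, Finset.mem_filter, mem_US]

lemma mem_BS {s h j k l : ℕ} :
    ((h, j, k, l) : ℕ × ℕ × ℕ × ℕ) ∈ BS s ↔
      ((1 ≤ h ∧ h ≤ 2 * q0 s) ∧ j < q0 s ∧ k < q0 s ∧ l < 2) ∧
        ¬ (q0 s * (j + k + l) ≤ (q0 s - 1) * h) := by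
  rw [BS, Finset.mem_filter, mem_US]

def sig (s : ℕ) (x : ℕ × ℕ × ℕ × ℕ) : ℕ × ℕ × ℕ × ℕ :=
  (2 * q0 s + 1 - x.1, q0 s - 1 - x.2.1, q0 s - 1 - x.2.2.1, 1 - x.2.2.2)

lemma card_GS_eq_BS {s : ℕ} (hs : 1 ≤ s) : (GS s).card = (BS s).card := by
  have h2 : 2 ≤ q0 s := hq2 hs
  apply Finset.card_bij' (fun x _ => sig s x) (fun x _ => sig s x)
  · rintro ⟨h, j, k, l⟩ hx
    rw [mem_GS] at hx
    obtain ⟨⟨⟨hh1, hh2⟩, hj, hk, hl⟩, hgood⟩ := hx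
    show (2 * q0 s + 1 - h, q0 s - 1 - j, q0 s - 1 - k, 1 - l) ∈ BS s
    rw [mem_BS]
    refine ⟨⟨⟨by omega, by omega⟩, by omega, by omega, by omega⟩, ?_⟩
    rw [flip h2 hj hk hl (by omega)]
    omega
  · rintro ⟨h, j, k, l⟩ hx
    rw [mem_BS] at hx
    obtain ⟨⟨⟨hh1, hh2⟩, hj, hk, hl⟩, hbad⟩ := hx
    show (2 * q0 s + 1 - h, q0 s - 1 - j, q0 s - 1 - k, 1 - l) ∈ GS s
    rw [mem_GS]
    refine ⟨⟨⟨by omega, by omega⟩, by omega, by omega, by omega⟩, ?_⟩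
    rw [flip h2 hj hk hl (by omega)]
    exact hbad
  · rintro ⟨h, j, k, l⟩ hx
    rw [mem_GS] at hx
    obtain ⟨⟨⟨hh1, hh2⟩, hj, hk, hl⟩, -⟩ := hx
    show sig s (2 * q0 s + 1 - h, q0 s - 1 - j, q0 s - 1 - k, 1 - l) = (h, j, k, l)
    rw [sig]
    refine Prod.ext (by simp; omega) (Prod.ext (by simp; omega) (Prod.ext (by simp; omega) (by simp; omega)))
  · rintro ⟨h, j, k, l⟩ hx
    rw [mem_BS] at hx
    obtain ⟨⟨⟨hh1, hh2⟩, hj, hk, hl⟩, -⟩ := hx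
    show sig s (2 * q0 s + 1 - h, q0 s - 1 - j, q0 s - 1 - k, 1 - l) = (h, j, k, l)
    rw [sig]
    refine Prod.ext (by simp; omega) (Prod.ext (by simp; omega) (Prod.ext (by simp; omega) (by simp; omega)))

lemma card_GS {s : ℕ} (hs : 1 ≤ s) : (GS s).card = 2 * q0 s ^ 3 := by
  have h2 : 2 ≤ q0 s := hq2 hs
  have hsum : (GS s).card + (BS s).card = (US s).card :=
    Finset.card_filter_add_card_filter_not _
  have hU : (US s).card = 4 * q0 s ^ 3 := by
    rw [US]
    simp only [Finset.card_product, Nat.card_Icc, Finset.card_range]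
    have e : 2 * q0 s + 1 - 1 = 2 * q0 s := by omega
    rw [e]; ring
  have := card_GS_eq_BS hs
  omega

end S3

namespace S3

def pE (s : ℕ) (x : ℕ × ℕ × ℕ × ℕ) : Prop :=
  x.1 = 2 * q0 s ∧ (x.2.2.2 + 2 * x.2.2.1) * q0 s + x.2.1 ≤ 2 * q0 s

instance (s : ℕ) : DecidablePred (pE s) := fun x => by unfold pE; infer_instance

def TS (s : ℕ) : Finset (ℕ × ℕ × ℕ × ℕ) := (GS s).filter (fun x => ¬ pE s x)

def ES (s : ℕ) : Finset (ℕ × ℕ × ℕ × ℕ) := (GS s).filter (fun x => pE s x)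

lemma mem_TS {s h j k l : ℕ} :
    ((h, j, k, l) : ℕ × ℕ × ℕ × ℕ) ∈ TS s ↔
      (((1 ≤ h ∧ h ≤ 2 * q0 s) ∧ j < q0 s ∧ k < q0 s ∧ l < 2) ∧
        q0 s * (j + k + l) ≤ (q0 s - 1) * h) ∧
      ¬ (h = 2 * q0 s ∧ (l + 2 * k) * q0 s + j ≤ 2 * q0 s) := by
  rw [TS, Finset.mem_filter, mem_GS]; rfl

lemma mem_ES {s h j k l : ℕ} :
    ((h, j, k, l) : ℕ × ℕ × ℕ × ℕ) ∈ ES s ↔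
      (((1 ≤ h ∧ h ≤ 2 * q0 s) ∧ j < q0 s ∧ k < q0 s ∧ l < 2) ∧
        q0 s * (j + k + l) ≤ (q0 s - 1) * h) ∧
      (h = 2 * q0 s ∧ (l + 2 * k) * q0 s + j ≤ 2 * q0 s) := by
  rw [ES, Finset.mem_filter, mem_GS]; rfl

lemma goodE {s j k l : ℕ} (hs : 1 ≤ s) (ht : j + k + l ≤ q0 s) :
    q0 s * (j + k + l) ≤ (q0 s - 1) * (2 * q0 s) := by
  have h2 : 2 ≤ q0 s := hq2 hs
  zify [show 1 ≤ q0 s by omega]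
  have ht' : ((j : ℤ) + k + l) ≤ (q0 s : ℤ) := by exact_mod_cast ht
  have h2' : (2 : ℤ) ≤ (q0 s : ℤ) := by exact_mod_cast h2
  nlinarith [ht', h2']

/-- members of `ES` have a very constrained shape -/
lemma ES_shape {s h j k l : ℕ} (hs : 1 ≤ s) (hx : ((h, j, k, l) : ℕ × ℕ × ℕ × ℕ) ∈ ES s) :
    h = 2 * q0 s ∧ j < q0 s ∧
      ((k = 0 ∧ l = 0) ∨ (k = 0 ∧ l = 1) ∨ (k = 1 ∧ l = 0 ∧ j = 0)) := by
  have h2 : 2 ≤ q0 s := hq2 hs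
  rw [mem_ES] at hx
  obtain ⟨⟨⟨⟨hh1, hh2⟩, hj, hk, hl⟩, -⟩, he, hsmall⟩ := hx
  refine ⟨he, hj, ?_⟩
  by_cases h3 : 3 ≤ l + 2 * k
  · exfalso
    have := Nat.mul_le_mul_right (q0 s) h3
    omega
  · -- l + 2k ≤ 2
    have hcase : (k = 0 ∧ l = 0) ∨ (k = 0 ∧ l = 1) ∨ (k = 1 ∧ l = 0) := by omega
    rcases hcase with ⟨hk0, hl0⟩ | ⟨hk0, hl0⟩ | ⟨hk0, hl0⟩
    · exact Or.inl ⟨hk0, hl0⟩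
    · exact Or.inr (Or.inl ⟨hk0, hl0⟩)
    · subst hk0; subst hl0
      refine Or.inr (Or.inr ⟨rfl, rfl, ?_⟩)
      norm_num at hsmall
      omega

lemma card_ES {s : ℕ} (hs : 1 ≤ s) : (ES s).card = 2 * q0 s + 1 := by
  classical
  have h2 : 2 ≤ q0 s := hq2 hs
  have hES : ES s =
      (((Finset.range (q0 s)).image (fun j => ((2 * q0 s, j, 0, 0) : ℕ × ℕ × ℕ × ℕ))) ∪
        ((Finset.range (q0 s)).image (fun j => ((2 * q0 s, j, 0, 1) : ℕ × ℕ × ℕ × ℕ)))) ∪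
        {((2 * q0 s, 0, 1, 0) : ℕ × ℕ × ℕ × ℕ)} := by
    ext ⟨h, j, k, l⟩
    simp only [Finset.mem_union, Finset.mem_image, Finset.mem_range, Finset.mem_singleton,
      Prod.mk.injEq]
    constructor
    · intro hx
      obtain ⟨he, hj, hshape⟩ := ES_shape hs hx
      rcases hshape with ⟨hk0, hl0⟩ | ⟨hk0, hl0⟩ | ⟨hk0, hl0, hj0⟩
      · exact Or.inl (Or.inl ⟨j, hj, he.symm, rfl, hk0.symm, hl0.symm⟩)
      · exact Or.inl (Or.inr ⟨j, hj, he.symm, rfl, hk0.symm, hl0.symm⟩)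
      · exact Or.inr ⟨he, hj0, hk0, hl0⟩
    · intro hx
      rcases hx with (⟨i, hi, e1, e2, e3, e4⟩ | ⟨i, hi, e1, e2, e3, e4⟩) | ⟨e1, e2, e3, e4⟩ <;>
        subst e1 <;> subst e2 <;> subst e3 <;> subst e4
      · rw [mem_ES]
        refine ⟨⟨⟨⟨by omega, by omega⟩, by omega, by omega, by omega⟩, ?_⟩, rfl, by omega⟩
        exact goodE hs (by omega)
      · rw [mem_ES]
        refine ⟨⟨⟨⟨by omega, by omega⟩, by omega, by omega, by omega⟩, ?_⟩, rfl, by omega⟩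
        exact goodE hs (by omega)
      · rw [mem_ES]
        refine ⟨⟨⟨⟨by omega, by omega⟩, by omega, by omega, by omega⟩, ?_⟩, rfl, by omega⟩
        exact goodE hs (by omega)
  have inj0 : Function.Injective (fun j => ((2 * q0 s, j, 0, 0) : ℕ × ℕ × ℕ × ℕ)) := by
    intro a b e
    simpa using e
  have inj1 : Function.Injective (fun j => ((2 * q0 s, j, 0, 1) : ℕ × ℕ × ℕ × ℕ)) := by
    intro a b e
    simpa using e
  have d1 : Disjoint ((Finset.range (q0 s)).image (fun j => ((2 * q0 s, j, 0, 0) : ℕ × ℕ × ℕ × ℕ)))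
      ((Finset.range (q0 s)).image (fun j => ((2 * q0 s, j, 0, 1) : ℕ × ℕ × ℕ × ℕ))) := by
    rw [Finset.disjoint_left]
    rintro x hx hy
    simp only [Finset.mem_image, Finset.mem_range] at hx hy
    obtain ⟨a, -, ha⟩ := hx
    obtain ⟨b, -, hb⟩ := hy
    rw [← hb] at ha
    simp [Prod.ext_iff] at ha
  have d2 : Disjoint
      ((((Finset.range (q0 s)).image (fun j => ((2 * q0 s, j, 0, 0) : ℕ × ℕ × ℕ × ℕ))) ∪
        ((Finset.range (q0 s)).image (fun j => ((2 * q0 s, j, 0, 1) : ℕ × ℕ × ℕ × ℕ)))))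
      ({((2 * q0 s, 0, 1, 0) : ℕ × ℕ × ℕ × ℕ)} : Finset (ℕ × ℕ × ℕ × ℕ)) := by
    rw [Finset.disjoint_right]
    rintro x hx hy
    simp only [Finset.mem_singleton] at hx
    subst hx
    simp only [Finset.mem_union, Finset.mem_image, Finset.mem_range] at hy
    rcases hy with ⟨a, -, ha⟩ | ⟨a, -, ha⟩ <;> simp [Prod.ext_iff] at ha
  rw [hES, Finset.card_union_of_disjoint d2, Finset.card_union_of_disjoint d1,
    Finset.card_image_of_injective _ inj0, Finset.card_image_of_injective _ inj1,
    Finset.card_range, Finset.card_singleton]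
  omega

lemma card_TS {s : ℕ} (hs : 1 ≤ s) : (TS s).card = 2 * q0 s ^ 3 - 2 * q0 s - 1 := by
  have h2 : 2 ≤ q0 s := hq2 hs
  have hsum : (ES s).card + (TS s).card = (GS s).card := by
    rw [ES, TS]
    exact Finset.card_filter_add_card_filter_not _
  have h1 := card_GS hs
  have h3 := card_ES hs
  have h8 : 8 ≤ q0 s ^ 3 := by
    calc (8:ℕ) = 2^3 := by norm_num
    _ ≤ q0 s ^ 3 := Nat.pow_le_pow_left h2 3
  omega

end S3

namespace S3

def fS (s : ℕ) (x : ℕ × ℕ × ℕ × ℕ) : ℕ :=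
  x.1 * qS s - ((x.2.2.2 + 2 * x.2.2.1) * q0 s + x.2.1)

lemma hQbig {s : ℕ} (hs : 1 ≤ s) : 2 * q0 s + 1 ≤ qS s := by
  have h2 : 2 ≤ q0 s := hq2 hs
  have h3 : 2 * q0 s ≤ q0 s * q0 s := Nat.mul_le_mul_right (q0 s) h2
  have h4 := hQval s
  omega

lemma r_bound {s j k l : ℕ} (hs : 1 ≤ s) (hj : j < q0 s) (hk : k < q0 s) (hl : l < 2) :
    (l + 2 * k) * q0 s + j ≤ qS s - 1 := by
  have h2 : 2 ≤ q0 s := hq2 hs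
  have ha : l + 2 * k ≤ 2 * q0 s - 1 := by omega
  have h1 : (l + 2 * k) * q0 s ≤ (2 * q0 s - 1) * q0 s := Nat.mul_le_mul_right _ ha
  have h3 : (2 * q0 s - 1) * q0 s + q0 s = 2 * (q0 s * q0 s) := by
    have e : 2 * q0 s - 1 + 1 = 2 * q0 s := by omega
    calc (2 * q0 s - 1) * q0 s + q0 s = (2 * q0 s - 1 + 1) * q0 s := by ring
    _ = 2 * q0 s * q0 s := by rw [e]
    _ = 2 * (q0 s * q0 s) := by ring
  have h4 := hQval s
  omega

lemma hXM (s : ℕ) : 2 * (q0 s * (qS s - 1)) + 2 * q0 s = 2 * (q0 s * qS s) := by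
  have h8 : 1 ≤ qS s := by
    have : 0 < qS s := by rw [qS, q0]; positivity
    omega
  zify [h8]
  ring

lemma fS_bounds {s h j k l : ℕ} (hs : 1 ≤ s)
    (hx : ((h, j, k, l) : ℕ × ℕ × ℕ × ℕ) ∈ TS s) :
    1 ≤ fS s (h, j, k, l) ∧ fS s (h, j, k, l) ≤ 2 * (q0 s * (qS s - 1)) - 1 := by
  have h2 : 2 ≤ q0 s := hq2 hs
  rw [mem_TS] at hx
  obtain ⟨⟨⟨⟨hh1, hh2⟩, hj, hk, hl⟩, hgood⟩, hnp⟩ := hx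
  have hr := r_bound hs hj hk hl
  have hQ1 : qS s ≤ h * qS s := Nat.le_mul_of_pos_left _ (by omega)
  have hQb := hQbig hs
  have hfs : fS s (h, j, k, l) = h * qS s - ((l + 2 * k) * q0 s + j) := rfl
  have hX := hXM s
  constructor
  · omega
  · rcases Nat.lt_or_ge h (2 * q0 s) with hcase | hcase
    · -- h ≤ 2 q0 - 1
      have hm : h * qS s ≤ (2 * q0 s - 1) * qS s :=
        Nat.mul_le_mul_right _ (by omega)
      have hL : (2 * q0 s - 1) * qS s + qS s = 2 * (q0 s * qS s) := by
        have e : 2 * q0 s - 1 + 1 = 2 * q0 s := by omega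
        calc (2 * q0 s - 1) * qS s + qS s = (2 * q0 s - 1 + 1) * qS s := by ring
        _ = 2 * q0 s * qS s := by rw [e]
        _ = 2 * (q0 s * qS s) := by ring
      omega
    · -- h = 2 q0
      have he : h = 2 * q0 s := by omega
      have hsm : ¬ ((l + 2 * k) * q0 s + j ≤ 2 * q0 s) := fun hc => hnp ⟨he, hc⟩
      subst he
      have hM : 2 * q0 s * qS s = 2 * (q0 s * qS s) := by ring
      have hfs2 : fS s (2 * q0 s, j, k, l) = 2 * q0 s * qS s - ((l + 2 * k) * q0 s + j) := rfl
      omega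

end S3

namespace S3

lemma fS_injOn {s : ℕ} (hs : 1 ≤ s) : Set.InjOn (fS s) (TS s : Set (ℕ × ℕ × ℕ × ℕ)) := by
  have h2 : 2 ≤ q0 s := hq2 hs
  have hQpos : 0 < qS s := by have := hQbig hs; omega
  rintro ⟨h1, j1, k1, l1⟩ hx ⟨h2', j2, k2, l2⟩ hy e
  rw [Finset.mem_coe, mem_TS] at hx hy
  obtain ⟨⟨⟨⟨ha1, ha2⟩, ha3, ha4, ha5⟩, -⟩, -⟩ := hx
  obtain ⟨⟨⟨⟨hb1, hb2⟩, hb3, hb4, hb5⟩, -⟩, -⟩ := hy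
  have hr1 := r_bound hs ha3 ha4 ha5
  have hr2 := r_bound hs hb3 hb4 hb5
  have hm1 : qS s ≤ h1 * qS s := Nat.le_mul_of_pos_left _ (by omega)
  have hm2 : qS s ≤ h2' * qS s := Nat.le_mul_of_pos_left _ (by omega)
  have e1 : h1 * qS s - ((l1 + 2 * k1) * q0 s + j1)
      = h2' * qS s - ((l2 + 2 * k2) * q0 s + j2) := e
  have e2 : h1 * qS s + ((l2 + 2 * k2) * q0 s + j2)
      = h2' * qS s + ((l1 + 2 * k1) * q0 s + j1) := by omega
  obtain ⟨eh, er⟩ := decode hQpos (by omega) (by omega) e2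
  obtain ⟨ea, ej⟩ := decode (show 0 < q0 s by omega) ha3 hb3 er.symm
  refine Prod.ext (by simpa using eh) (Prod.ext (by simpa using ej) ?_)
  have : k1 = k2 ∧ l1 = l2 := by omega
  exact Prod.ext (by simpa using this.1) (by simpa using this.2)

lemma set_eq {s : ℕ} (hs : 1 ≤ s) :
    F1 s ∩ Set.Icc 1 (2 * (q0 s * (qS s - 1)) - 1) = ↑((TS s).image (fS s)) := by
  have h2 : 2 ≤ q0 s := hq2 hs
  ext n
  simp only [Set.mem_inter_iff, Set.mem_Icc, F1, Set.mem_setOf_eq, Finset.coe_image,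
    Set.mem_image, Finset.mem_coe]
  constructor
  · rintro ⟨⟨h, j, k, l, hl, hk, hj, hmax, hh2, hn⟩, hn1, hn2⟩
    have hh1 : 1 ≤ h := by
      have : (1 : ℤ) ≤ (h : ℤ) := le_trans (le_max_left _ _) hmax
      exact_mod_cast this
    have hgood : q0 s * (j + k + l) ≤ (q0 s - 1) * h :=
      (mval_le_iff hs h j k l hk hl).1 (le_trans (le_max_right _ _) hmax)
    have hn' : n = h * qS s - ((l + 2 * k) * q0 s + j) := by
      rw [hn, Nat.sub_sub]
    refine ⟨(h, j, k, l), ?_, hn'.symm⟩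
    rw [mem_TS]
    refine ⟨⟨⟨⟨hh1, hh2⟩, hj, hk, by omega⟩, hgood⟩, ?_⟩
    rintro ⟨he, hsm⟩
    subst he
    have hM : 2 * q0 s * qS s = 2 * (q0 s * qS s) := by ring
    have hX := hXM s
    have hQb := hQbig hs
    have hmm : qS s ≤ q0 s * qS s := Nat.le_mul_of_pos_left _ (by omega)
    omega
  · rintro ⟨⟨h, j, k, l⟩, hx, rfl⟩
    obtain ⟨hb1, hb2⟩ := fS_bounds hs hx
    rw [mem_TS] at hx
    obtain ⟨⟨⟨⟨hh1, hh2⟩, hj, hk, hl⟩, hgood⟩, -⟩ := hx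
    refine ⟨⟨h, j, k, l, by omega, hk, hj, ?_, hh2, ?_⟩, hb1, hb2⟩
    · rw [max_le_iff]
      exact ⟨by exact_mod_cast hh1, (mval_le_iff hs h j k l hk (by omega)).2 hgood⟩
    · show fS s (h, j, k, l) = h * qS s - (l + 2 * k) * q0 s - j
      rw [Nat.sub_sub]
      rfl

end S3


/-- `|F₁ ∩ [1, 2g−1]| = 2 q₀³ − 2 q₀ − 1`, where `g = q₀(q−1)`. -/
theorem stmt3 (s : ℕ) (hs : 1 ≤ s) :
    (F1 s ∩ Set.Icc 1 (2 * (q0 s * (qS s - 1)) - 1)).ncard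
      = 2 * q0 s ^ 3 - 2 * q0 s - 1 := by
  rw [S3.set_eq hs, Set.ncard_coe_finset,
    Finset.card_image_of_injOn (S3.fS_injOn hs), S3.card_TS hs]
end

section
/- The sets F_1 and F_2 are disjoint: no integer of the form hq − (ℓ+2k)q_0 − j with ℓ ∈ {0,1}, k ∈ {0,…,q_0−1}, j ∈ {0,…,q_0−1}, h ∈ {max{1, m_{j,k,ℓ}},…,2q_0} equals an integer of the form h̃q − (2h̃−2q_0−1)q_0 − (q_0−1) with h̃ ∈ {q_0+1,…,2q_0}. -/
lemma stmt4_aux (a H : ℚ) (ha : 2 ≤ a) (hH : a + 1 ≤ H) :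
    H < a / (a - 1) * ((a - 1) + (H - a - 1) + 1 - ((H - a - 1) + 1) / (2 * a ^ 2)) := by
  have h1a : (0 : ℚ) < a - 1 := by linarith
  have h0a : (0 : ℚ) < a := by linarith
  have hkey : a / (a - 1) * ((a - 1) + (H - a - 1) + 1 - ((H - a - 1) + 1) / (2 * a ^ 2)) - H
      = (H - a) * (2 * a - 1) / ((a - 1) * (2 * a)) := by
    field_simp
    ring
  have hpos : 0 < (H - a) * (2 * a - 1) / ((a - 1) * (2 * a)) := by
    apply div_pos
    · nlinarith
    · nlinarith
  linarith

/-- `F₁` and `F₂` are disjoint. -/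
theorem stmt4 (s : ℕ) (hs : 1 ≤ s) :
    F1 s ∩ F2 s = ∅ := by
  rw [Set.eq_empty_iff_forall_notMem]
  rintro n ⟨⟨h, j, k, l, hl, hk, hj, hm, hh2, rfl⟩, h', hh'1, hh'2, heq⟩
  set M := mval s j k l with hM
  clear_value M
  have hQ2 : 2 ≤ q0 s := by
    calc 2 = 2 ^ 1 := by norm_num
    _ ≤ 2 ^ s := Nat.pow_le_pow_right (by norm_num) hs
    _ = q0 s := rfl
  have hP2 : qS s = 2 * q0 s * q0 s := by rw [qS]; ring
  have h1 : 1 ≤ h := by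
    have := le_trans (le_max_left 1 M) hm
    exact_mod_cast this
  -- bounds on the subtracted parts
  have hA : (l + 2 * k) * q0 s + j < qS s := by
    have h1' : l + 2 * k ≤ 2 * q0 s - 1 := by omega
    have : (l + 2 * k) * q0 s ≤ (2 * q0 s - 1) * q0 s :=
      Nat.mul_le_mul_right _ h1'
    have h2' : (2 * q0 s - 1) * q0 s + q0 s = 2 * q0 s * q0 s := by
      rw [Nat.sub_mul, one_mul,
        Nat.sub_add_cancel (Nat.le_mul_of_pos_left _ (by omega))]
    omega
  have hc' : 2 * h' - 2 * q0 s - 1 ≤ 2 * q0 s - 1 := by omega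
  have hB : (2 * h' - 2 * q0 s - 1) * q0 s + (q0 s - 1) < qS s := by
    have : (2 * h' - 2 * q0 s - 1) * q0 s ≤ (2 * q0 s - 1) * q0 s :=
      Nat.mul_le_mul_right _ hc'
    have h2' : (2 * q0 s - 1) * q0 s + q0 s = 2 * q0 s * q0 s := by
      rw [Nat.sub_mul, one_mul,
        Nat.sub_add_cancel (Nat.le_mul_of_pos_left _ (by omega))]
    omega
  have hPh : qS s ≤ h * qS s := Nat.le_mul_of_pos_left _ h1
  have hPh' : qS s ≤ h' * qS s := Nat.le_mul_of_pos_left _ (by omega)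
  have c1a : (l + 2 * k) * q0 s ≤ h * qS s :=
    le_trans (le_trans (Nat.le_add_right _ j) hA.le) hPh
  have c1b : j ≤ h * qS s - (l + 2 * k) * q0 s := by
    apply Nat.le_sub_of_add_le
    calc j + (l + 2 * k) * q0 s = (l + 2 * k) * q0 s + j := by ring
    _ ≤ qS s := hA.le
    _ ≤ h * qS s := hPh
  have c2a : (2 * h' - 2 * q0 s - 1) * q0 s ≤ h' * qS s :=
    le_trans (le_trans (Nat.le_add_right _ _) hB.le) hPh'
  have c2b : q0 s - 1 ≤ h' * qS s - (2 * h' - 2 * q0 s - 1) * q0 s := by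
    apply Nat.le_sub_of_add_le
    calc q0 s - 1 + (2 * h' - 2 * q0 s - 1) * q0 s
        = (2 * h' - 2 * q0 s - 1) * q0 s + (q0 s - 1) := by ring
    _ ≤ qS s := hB.le
    _ ≤ h' * qS s := hPh'
  have d1 : 2 * q0 s ≤ 2 * h' := by omega
  have d2 : 1 ≤ 2 * h' - 2 * q0 s := by omega
  have d3 : 1 ≤ q0 s := by omega
  zify [c1a, c1b, c2a, c2b, d1, d2, d3] at heq
  -- cast bounds to ℤ
  have hAZ : ((l : ℤ) + 2 * k) * q0 s + j < qS s := by exact_mod_cast hA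
  have hBZ : (2 * (h' : ℤ) - 2 * q0 s - 1) * q0 s + ((q0 s : ℤ) - 1) < qS s := by
    have := hB
    zify [hc', d1, d2, d3] at this
    convert this using 2
  have hAZ0 : (0 : ℤ) ≤ ((l : ℤ) + 2 * k) * q0 s + j := by positivity
  have hBZ0 : (0 : ℤ) ≤ (2 * (h' : ℤ) - 2 * q0 s - 1) * q0 s + ((q0 s : ℤ) - 1) := by
    have e1 : (1:ℤ) ≤ 2 * (h' : ℤ) - 2 * q0 s - 1 := by
      have : q0 s + 1 ≤ h' := hh'1
      omega
    have e2 : (0:ℤ) < (q0 s : ℤ) := by exact_mod_cast (by omega : 0 < q0 s)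
    nlinarith
  have hPZ : (0 : ℤ) < (qS s : ℤ) := by
    have : 0 < qS s := by omega
    exact_mod_cast this
  have key : ((h : ℤ) - h') * qS s
      = (((l : ℤ) + 2 * k) * q0 s + j)
        - ((2 * (h' : ℤ) - 2 * q0 s - 1) * q0 s + ((q0 s : ℤ) - 1)) := by
    linear_combination heq
  have hd1 : ((h : ℤ) - h') * qS s < 1 * qS s := by
    rw [one_mul]; linarith only [key, hAZ, hBZ0]
  have hd2 : (-1 : ℤ) * qS s < ((h : ℤ) - h') * qS s := by
    rw [neg_one_mul]; linarith only [key, hBZ, hAZ0]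
  have hhh' : h = h' := by
    have e1 : (h : ℤ) - h' < 1 := lt_of_mul_lt_mul_right hd1 hPZ.le
    have e2 : (-1 : ℤ) < (h : ℤ) - h' := lt_of_mul_lt_mul_right hd2 hPZ.le
    omega
  subst hhh'
  have EZ : ((l : ℤ) + 2 * k) * q0 s + j
      = (2 * (h : ℤ) - 2 * q0 s - 1) * q0 s + ((q0 s : ℤ) - 1) := by
    linear_combination -key
  -- deduce j = q0 - 1 and l + 2k = 2h - 2q0 - 1
  have hjZ : (j : ℤ) < q0 s := by exact_mod_cast hj
  have hjZ0 : (0 : ℤ) ≤ (j : ℤ) := by positivity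
  have hQZ : (2 : ℤ) ≤ q0 s := by exact_mod_cast hQ2
  have key2 : (((l : ℤ) + 2 * k) - (2 * (h : ℤ) - 2 * q0 s - 1)) * q0 s
      = ((q0 s : ℤ) - 1) - j := by linear_combination EZ
  have hXY : (l : ℤ) + 2 * k = 2 * (h : ℤ) - 2 * q0 s - 1 := by
    have e1 : (((l : ℤ) + 2 * k) - (2 * (h : ℤ) - 2 * q0 s - 1)) * q0 s < 1 * q0 s := by
      rw [one_mul]; linarith only [key2, hjZ0, hQZ]
    have e2 : (-1 : ℤ) * q0 s < (((l : ℤ) + 2 * k) - (2 * (h : ℤ) - 2 * q0 s - 1)) * q0 s := by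
      rw [neg_one_mul]; linarith only [key2, hjZ, hQZ]
    have f1 := lt_of_mul_lt_mul_right e1 (by linarith only [hQZ] : (0:ℤ) ≤ (q0 s : ℤ))
    have f2 := lt_of_mul_lt_mul_right e2 (by linarith only [hQZ] : (0:ℤ) ≤ (q0 s : ℤ))
    omega
  have hjQ : (j : ℤ) = (q0 s : ℤ) - 1 := by
    have := key2
    rw [hXY] at EZ
    linarith only [EZ]
  have hl1 : l = 1 := by
    have hh'Z : (q0 s : ℤ) + 1 ≤ (h : ℤ) := by exact_mod_cast hh'1
    omega
  have hkZ : (k : ℤ) = (h : ℤ) - q0 s - 1 := by omega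
  -- now contradiction with the constraint h ≥ mval
  have hh'Z : (q0 s : ℤ) + 1 ≤ (h : ℤ) := by exact_mod_cast hh'1
  have hh2Z : (h : ℤ) ≤ 2 * q0 s := by exact_mod_cast hh2
  have hx : (h : ℚ) < ((q0 s : ℚ) / ((q0 s : ℚ) - 1)) *
      ((j : ℚ) + (k : ℚ) + (l : ℚ) - ((k : ℚ) + (l : ℚ)) / (qS s : ℚ)) := by
    have jQ : (j : ℚ) = (q0 s : ℚ) - 1 := by exact_mod_cast hjQ
    have kQ : (k : ℚ) = (h : ℚ) - q0 s - 1 := by exact_mod_cast hkZ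
    have lQ : (l : ℚ) = 1 := by rw [hl1]; norm_num
    have PQ : (qS s : ℚ) = 2 * (q0 s : ℚ) ^ 2 := by
      rw [qS]; push_cast; ring
    rw [jQ, kQ, lQ, PQ]
    exact stmt4_aux _ _ (by exact_mod_cast hQ2) (by exact_mod_cast hh'Z)
  have hmv : (h : ℤ) < M := by
    rw [hM, mval]
    exact Int.lt_ceil.mpr hx
  have : M ≤ (h : ℤ) := le_trans (le_max_right _ _) hm
  omega
end

section
/- Every integer t with 2g − q + 2 ≤ t ≤ 2g + 1, where g = q_0(q−1), belongs to the additive submonoid of ℕ generated by F_1 ∪ F_2. -/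
lemma mval_le_of (s c j k l : ℕ) (hQ : 2 ≤ q0 s)
    (h : q0 s * (j + k + l) ≤ c * (q0 s - 1)) : mval s j k l ≤ (c : ℤ) := by
  have hQ1 : (1:ℚ) < (q0 s : ℚ) := by exact_mod_cast (by omega : 1 < q0 s)
  have hq0 : (0:ℚ) < (qS s : ℚ) := by
    have : 0 < qS s := by
      have h0 : 0 < q0 s := by omega
      simp only [qS]; positivity
    exact_mod_cast this
  have h' : (q0 s : ℚ) * ((j:ℚ) + k + l) ≤ (c:ℚ) * ((q0 s:ℚ) - 1) := by
    have h2 : ((q0 s * (j + k + l) : ℕ) : ℚ) ≤ ((c * (q0 s - 1) : ℕ) : ℚ) := by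
      exact_mod_cast h
    rw [Nat.cast_mul, Nat.cast_mul, Nat.cast_sub (by omega : 1 ≤ q0 s)] at h2
    push_cast at h2 ⊢
    linarith
  rw [mval, Int.ceil_le]
  push_cast
  rw [div_mul_eq_mul_div, div_le_iff₀ (by linarith)]
  have hkl : (0:ℚ) ≤ ((k:ℚ) + l) / (qS s : ℚ) := by positivity
  have hQ0 : (0:ℚ) ≤ (q0 s : ℚ) := by linarith
  nlinarith [mul_nonneg hQ0 hkl]

/-- Every `t ∈ [2g − q + 2, 2g + 1]` lies in `⟨F₁ ∪ F₂⟩`, where `g = q₀(q−1)`. -/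
theorem stmt6 (s : ℕ) (hs : 1 ≤ s) (t : ℕ)
    (ht₁ : 2 * (q0 s * (qS s - 1)) - qS s + 2 ≤ t)
    (ht₂ : t ≤ 2 * (q0 s * (qS s - 1)) + 1) :
    t ∈ AddSubmonoid.closure (F1 s ∪ F2 s) := by
  have hQ : 2 ≤ q0 s := by
    have : 2 ^ 1 ≤ 2 ^ s := Nat.pow_le_pow_right (by norm_num) hs
    simpa [q0] using this
  have hQpos : 0 < q0 s := by omega
  have hq2 : qS s = 2 * q0 s * q0 s := by rw [qS]; ring
  have hqq8 : 8 ≤ qS s := by rw [hq2]; nlinarith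
  -- linearize the genus expression
  have hA : 2 * (q0 s * (qS s - 1)) + 2 * q0 s = 2 * (q0 s * qS s) := by
    have h1 : q0 s * (qS s - 1) + q0 s = q0 s * qS s := by
      calc q0 s * (qS s - 1) + q0 s = q0 s * ((qS s - 1) + 1) := by ring
        _ = q0 s * qS s := by rw [show qS s - 1 + 1 = qS s from by omega]
    calc 2 * (q0 s * (qS s - 1)) + 2 * q0 s
        = 2 * (q0 s * (qS s - 1) + q0 s) := by ring
      _ = 2 * (q0 s * qS s) := by rw [h1]
  have hGbig : qS s ≤ q0 s * (qS s - 1) := by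
    have h1 : 2 * (qS s - 1) ≤ q0 s * (qS s - 1) := Nat.mul_le_mul_right _ hQ
    omega
  have ht2' : t ≤ 2 * (q0 s * qS s) := by omega
  obtain ⟨r, hr⟩ := Nat.exists_eq_add_of_le ht2'
  -- hr : 2 * (q0 s * qS s) = t + r
  by_cases hbr1 : qS s ≤ r
  · -- Branch 1 : use F1 with h = 2q₀ − 1
    obtain ⟨r', hr'⟩ : ∃ r', r = qS s + r' := ⟨r - qS s, by omega⟩
    have hr'ub : r' + 2 ≤ 2 * q0 s := by omega
    have hdm : q0 s * (r' / q0 s) + r' % q0 s = r' := Nat.div_add_mod r' (q0 s)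
    have hl : r' / q0 s < 2 := (Nat.div_lt_iff_lt_mul hQpos).2 (by omega)
    have hj : r' % q0 s < q0 s := Nat.mod_lt _ hQpos
    obtain ⟨L, hL⟩ : ∃ x, r' / q0 s = x := ⟨_, rfl⟩
    obtain ⟨J, hJ⟩ : ∃ x, r' % q0 s = x := ⟨_, rfl⟩
    rw [hL] at hdm hl
    rw [hJ] at hdm hj
    have hjl : J + L + 1 ≤ q0 s := by
      rcases (by omega : L = 0 ∨ L = 1) with h | h
      · omega
      · rw [h, mul_one] at hdm; omega
    have hm : mval s J 0 L ≤ ((2 * q0 s - 1 : ℕ) : ℤ) := by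
      refine mval_le_of s _ _ _ _ hQ ?_
      calc q0 s * (J + 0 + L) ≤ q0 s * (q0 s - 1) :=
            Nat.mul_le_mul le_rfl (by omega)
        _ ≤ (2 * q0 s - 1) * (q0 s - 1) := Nat.mul_le_mul (by omega) le_rfl
    have hmem : t ∈ F1 s := by
      refine ⟨2 * q0 s - 1, J, 0, L, by omega, hQpos, hj, ?_, by omega, ?_⟩
      · exact max_le (by exact_mod_cast (by omega : 1 ≤ 2 * q0 s - 1)) hm
      · have hM : (2 * q0 s - 1) * qS s + qS s = 2 * (q0 s * qS s) := by
          calc (2 * q0 s - 1) * qS s + qS s = ((2 * q0 s - 1) + 1) * qS s := by ring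
            _ = (2 * q0 s) * qS s := by rw [show 2 * q0 s - 1 + 1 = 2 * q0 s from by omega]
            _ = 2 * (q0 s * qS s) := by ring
        have hB : (L + 2 * 0) * q0 s = q0 s * L := by ring
        rw [hB]
        omega
    exact AddSubmonoid.subset_closure (Set.mem_union_left _ hmem)
  · by_cases hbr2 : r + 1 = qS s
    · -- Branch 2 : use F2 with h = 2q₀
      have hmem : t ∈ F2 s := by
        refine ⟨2 * q0 s, by omega, le_rfl, ?_⟩
        have e1 : 2 * (2 * q0 s) - 2 * q0 s - 1 = 2 * q0 s - 1 := by omega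
        rw [e1]
        have e2 : (2 * q0 s - 1) * q0 s + q0 s = qS s := by
          calc (2 * q0 s - 1) * q0 s + q0 s = ((2 * q0 s - 1) + 1) * q0 s := by ring
            _ = 2 * q0 s * q0 s := by rw [show 2 * q0 s - 1 + 1 = 2 * q0 s from by omega]
            _ = qS s := hq2.symm
        have e3 : 2 * q0 s * qS s = 2 * (q0 s * qS s) := by ring
        rw [e3]
        omega
      exact AddSubmonoid.subset_closure (Set.mem_union_right _ hmem)
    · -- Branch 3 : use F1 with h = 2q₀
      have hdm : q0 s * (r / q0 s) + r % q0 s = r := Nat.div_add_mod r (q0 s)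
      have ha : r / q0 s < 2 * q0 s := (Nat.div_lt_iff_lt_mul hQpos).2 (by omega)
      have hj : r % q0 s < q0 s := Nat.mod_lt _ hQpos
      obtain ⟨A, hA'⟩ : ∃ x, r / q0 s = x := ⟨_, rfl⟩
      obtain ⟨J, hJ⟩ : ∃ x, r % q0 s = x := ⟨_, rfl⟩
      rw [hA'] at hdm ha
      rw [hJ] at hdm hj
      have hdm2 : 2 * (A / 2) + A % 2 = A := Nat.div_add_mod A 2
      have hk : A / 2 < q0 s := by omega
      have hsum : J + A / 2 + A % 2 + 2 ≤ 2 * q0 s := by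
        rcases (by omega : A + 3 ≤ 2 * q0 s ∨ A + 2 = 2 * q0 s ∨
            A + 1 = 2 * q0 s) with h | h | h
        · omega
        · omega
        · rw [show A = 2 * q0 s - 1 from by omega] at hdm
          have e : q0 s * (2 * q0 s - 1) + q0 s = qS s := by
            calc q0 s * (2 * q0 s - 1) + q0 s = q0 s * ((2 * q0 s - 1) + 1) := by ring
              _ = q0 s * (2 * q0 s) := by rw [show 2 * q0 s - 1 + 1 = 2 * q0 s from by omega]
              _ = qS s := by rw [hq2]; ring
          omega
      have hm : mval s J (A / 2) (A % 2) ≤ ((2 * q0 s : ℕ) : ℤ) := by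
        refine mval_le_of s _ _ _ _ hQ ?_
        calc q0 s * (J + A / 2 + A % 2)
            ≤ q0 s * (2 * (q0 s - 1)) := Nat.mul_le_mul le_rfl (by omega)
          _ = 2 * q0 s * (q0 s - 1) := by ring
      have hmem : t ∈ F1 s := by
        refine ⟨2 * q0 s, J, A / 2, A % 2, by omega, hk, hj, ?_, le_rfl, ?_⟩
        · exact max_le (by exact_mod_cast (by omega : 1 ≤ 2 * q0 s)) hm
        · have hB : (A % 2 + 2 * (A / 2)) * q0 s = q0 s * A := by
            calc (A % 2 + 2 * (A / 2)) * q0 s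
                = (2 * (A / 2) + A % 2) * q0 s := by ring
              _ = A * q0 s := by rw [hdm2]
              _ = q0 s * A := by ring
          rw [hB]
          have e3 : 2 * q0 s * qS s = 2 * (q0 s * qS s) := by ring
          rw [e3]
          omega
      exact AddSubmonoid.subset_closure (Set.mem_union_left _ hmem)
end

section
/- The complement in ℕ of the additive submonoid ⟨F_1 ∪ F_2⟩ generated by F_1 ∪ F_2 has exactly g = q_0(q−1) elements; that is, ⟨F_1 ∪ F_2⟩ is a numerical semigroup of genus g. -/
open Finset

lemma sum_range_mul {M : Type*} [AddCommMonoid M] (f : ℕ → M) (a b : ℕ) :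
    ∑ d ∈ range (a * b), f d = ∑ i ∈ range a, ∑ j ∈ range b, f (i * b + j) := by
  induction a with
  | zero => simp
  | succ n ih => rw [Nat.succ_mul, sum_range_add, ih, sum_range_succ]

section LevelSet

variable (q : ℕ) (H : ℕ → ℕ)

def levelSet : Set ℕ := {n | n = 0 ∨ ∃ h d, d < q ∧ H d ≤ h ∧ n + d = h * q}

def levelGaps : Finset ℕ :=
  ((range q).sigma fun d => Ico 1 (H d)).image fun p => p.2 * q - p.1

variable {q H}

lemma eq_and_eq_of_mul_add_eq_mul_add {i i' d d' : ℕ} (hd : d < q) (hd' : d' < q)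
    (h : i * q + d' = i' * q + d) : i = i' ∧ d = d' := by
  have hdd : d' = d := by
    simpa [Nat.mul_add_mod, Nat.mod_eq_of_lt hd, Nat.mod_eq_of_lt hd', mul_comm]
      using congrArg (· % q) h
  subst hdd
  exact ⟨Nat.eq_of_mul_eq_mul_right (show 0 < q by omega) (by omega : i * q = i' * q), rfl⟩

lemma sub_mem_levelSet {h d : ℕ} (hd : d < q) (hh : H d ≤ h) (h1 : 1 ≤ h) :
    h * q - d ∈ levelSet q H :=
  Or.inr ⟨h, d, hd, hh, Nat.sub_add_cancel (hd.le.trans (Nat.le_mul_of_pos_left q h1))⟩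

lemma compl_levelSet (hq : 0 < q) : (levelSet q H)ᶜ = levelGaps q H := by
  ext n
  simp only [levelSet, levelGaps, Set.mem_compl_iff, Set.mem_ofPred_eq, coe_image, coe_sigma,
    Set.mem_image, Set.mem_sigma_iff, coe_range, Set.mem_Iio, coe_Ico, Set.mem_Ico,
    Sigma.exists]
  constructor
  · intro hn
    have hdiv := Nat.div_add_mod' n q
    have hmod := Nat.mod_lt n hq
    by_cases hr : n % q = 0
    · refine ⟨0, n / q, ⟨hq, ?_, ?_⟩, by omega⟩
      · by_contra h0
        have hlt : n < q :=
          (Nat.div_eq_zero_iff.mp (Nat.lt_one_iff.mp (not_le.mp h0))).resolve_left hq.ne'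
        exact hn (Or.inl (by rwa [Nat.mod_eq_of_lt hlt] at hr))
      · by_contra hle
        exact hn (Or.inr ⟨n / q, 0, hq, by omega, by omega⟩)
    · refine ⟨q - n % q, n / q + 1, ⟨by omega, Nat.le_add_left 1 _, ?_⟩, ?_⟩
      · by_contra hle
        exact hn (Or.inr ⟨n / q + 1, q - n % q, by omega, by omega, by rw [add_mul]; omega⟩)
      · rw [add_mul]; omega
  · rintro ⟨d, i, ⟨hd, hi1, hiH⟩, rfl⟩ (h0 | ⟨h, d', hd', hH, he⟩)
    · have := Nat.le_mul_of_pos_left q hi1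
      omega
    · have := Nat.le_mul_of_pos_left q hi1
      obtain ⟨rfl, rfl⟩ :=
        eq_and_eq_of_mul_add_eq_mul_add hd hd' (show i * q + d' = h * q + d by omega)
      omega

lemma card_levelGaps : (levelGaps q H).card = ∑ d ∈ range q, (H d - 1) := by
  rw [levelGaps, card_image_of_injOn, card_sigma]
  · simp
  · rintro ⟨d, i⟩ hdi ⟨d', i'⟩ hdi' he
    simp only [coe_sigma, Set.mem_sigma_iff, coe_range, Set.mem_Iio, coe_Ico, Set.mem_Ico]
      at hdi hdi'
    have := Nat.le_mul_of_pos_left q hdi.2.1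
    have := Nat.le_mul_of_pos_left q hdi'.2.1
    obtain ⟨rfl, rfl⟩ := eq_and_eq_of_mul_add_eq_mul_add hdi.1 hdi'.1
      (show i * q + d' = i' * q + d by simp only at he; omega)
    rfl

theorem ncard_compl_levelSet (hq : 0 < q) :
    (levelSet q H)ᶜ.ncard = ∑ d ∈ range q, (H d - 1) := by
  rw [compl_levelSet hq, Set.ncard_coe_finset, card_levelGaps]

lemma add_mem_levelSet
    (hlt : ∀ d₁ < q, ∀ d₂ < q, d₁ + d₂ < q → H (d₁ + d₂) ≤ H d₁ + H d₂)
    (hge : ∀ d₁ < q, ∀ d₂ < q, q ≤ d₁ + d₂ → H (d₁ + d₂ - q) < H d₁ + H d₂)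
    {a b : ℕ} (ha : a ∈ levelSet q H) (hb : b ∈ levelSet q H) : a + b ∈ levelSet q H := by
  rcases ha with rfl | ⟨h₁, d₁, hd₁, hH₁, he₁⟩
  · simpa using hb
  rcases hb with rfl | ⟨h₂, d₂, hd₂, hH₂, he₂⟩
  · exact Or.inr ⟨h₁, d₁, hd₁, hH₁, he₁⟩
  by_cases hsum : d₁ + d₂ < q
  · refine Or.inr ⟨h₁ + h₂, d₁ + d₂, hsum, (hlt d₁ hd₁ d₂ hd₂ hsum).trans (by omega), ?_⟩
    rw [add_mul]; omega
  · have hH := hge d₁ hd₁ d₂ hd₂ (by omega)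
    refine Or.inr ⟨h₁ + h₂ - 1, d₁ + d₂ - q, ?_, ?_, ?_⟩
    · omega
    · omega
    have := Nat.le_mul_of_pos_left q (show 0 < h₁ + h₂ by omega)
    rw [Nat.sub_one_mul, add_mul]
    rw [add_mul] at this
    omega

lemma closure_subset_levelSet {A : Set ℕ} (hA : A ⊆ levelSet q H)
    (hlt : ∀ d₁ < q, ∀ d₂ < q, d₁ + d₂ < q → H (d₁ + d₂) ≤ H d₁ + H d₂)
    (hge : ∀ d₁ < q, ∀ d₂ < q, q ≤ d₁ + d₂ → H (d₁ + d₂ - q) < H d₁ + H d₂) :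
    (AddSubmonoid.closure A : Set ℕ) ⊆ levelSet q H := fun n hn => by
  induction hn using AddSubmonoid.closure_induction with
  | mem x hx => exact hA hx
  | zero => exact Or.inl rfl
  | add a b _ _ ha hb => exact add_mem_levelSet hlt hge ha hb

lemma levelSet_subset {M : AddSubmonoid ℕ} (hq : q ∈ M) (hpos : ∀ d < q, 0 < H d)
    (hM : ∀ d < q, H d * q - d ∈ M) : levelSet q H ⊆ M := by
  rintro n (rfl | ⟨h, d, hd, hH, he⟩)
  · exact M.zero_mem
  · have hn : n = (H d * q - d) + (h - H d) • q := by
      have := Nat.le_mul_of_pos_left q (hpos d hd)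
      rw [smul_eq_mul, Nat.sub_mul]
      have := Nat.mul_le_mul_right q hH
      omega
    rw [hn]
    exact M.add_mem (hM d hd) (M.nsmul_mem hq _)

end LevelSet

namespace Suzuki

lemma two_le_q0 {s : ℕ} (hs : 1 ≤ s) : 2 ≤ q0 s := by
  simpa [q0] using Nat.pow_le_pow_right (show 0 < 2 by norm_num) hs

lemma q0_pos (s : ℕ) : 0 < q0 s := Nat.two_pow_pos s

lemma qS_eq (s : ℕ) : qS s = 2 * q0 s * q0 s := by rw [qS]; ring

lemma qS_pos (s : ℕ) : 0 < qS s := by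
  have := q0_pos s
  rw [qS_eq]; positivity

/-- Writing `d = (ℓ + 2k) q₀ + j` with `j < q₀`, this is `j + k + ℓ`. -/
def weight (s d : ℕ) : ℕ := d % q0 s + (d / q0 s + 1) / 2

/-- `j = q₀ - 1` and `ℓ = 1`: the residues of the generators in `F₂`. -/
def IsF2Residue (s d : ℕ) : Prop := d % q0 s = q0 s - 1 ∧ d / q0 s % 2 = 1

instance (s : ℕ) : DecidablePred (IsF2Residue s) := fun _ => inferInstanceAs (Decidable (_ ∧ _))

def level (s d : ℕ) : ℕ := weight s d + if q0 s ≤ weight s d ∧ ¬IsF2Residue s d then 2 else 1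

lemma weight_mul_add {s j : ℕ} (w : ℕ) (hj : j < q0 s) :
    weight s (w * q0 s + j) = j + (w + 1) / 2 := by
  have h0 : 0 < q0 s := q0_pos s
  rw [weight, add_comm (w * q0 s), Nat.add_mul_mod_self_right, Nat.mod_eq_of_lt hj,
    Nat.add_mul_div_right _ _ h0, Nat.div_eq_of_lt hj, zero_add]

lemma weight_mul_add_le (s w j : ℕ) : weight s (w * q0 s + j) ≤ j + (w + 1) / 2 := by
  have h0 : 0 < q0 s := q0_pos s
  have hw := weight_mul_add (w + j / q0 s) (Nat.mod_lt j h0)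
  rw [add_mul, add_assoc, Nat.div_add_mod'] at hw
  have := Nat.div_add_mod' j (q0 s)
  have := Nat.le_mul_of_pos_right (j / q0 s) h0
  omega

lemma exists_mul_q0_add (s d : ℕ) : ∃ w j, j < q0 s ∧ d = w * q0 s + j :=
  ⟨_, _, Nat.mod_lt d (q0_pos s), (Nat.div_add_mod' d _).symm⟩

lemma weight_add_le (s d₁ d₂ : ℕ) : weight s (d₁ + d₂) ≤ weight s d₁ + weight s d₂ := by
  obtain ⟨w₁, j₁, hj₁, rfl⟩ := exists_mul_q0_add s d₁
  obtain ⟨w₂, j₂, hj₂, rfl⟩ := exists_mul_q0_add s d₂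
  have := weight_mul_add_le s (w₁ + w₂) (j₁ + j₂)
  rw [weight_mul_add w₁ hj₁, weight_mul_add w₂ hj₂,
    show w₁ * q0 s + j₁ + (w₂ * q0 s + j₂) = (w₁ + w₂) * q0 s + (j₁ + j₂) by ring]
  omega

lemma weight_add_sub_qS_add_two_le {s d₁ d₂ : ℕ} (h2 : 2 ≤ q0 s) (h : qS s ≤ d₁ + d₂) :
    weight s (d₁ + d₂ - qS s) + 2 ≤ weight s d₁ + weight s d₂ := by
  obtain ⟨w₁, j₁, hj₁, rfl⟩ := exists_mul_q0_add s d₁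
  obtain ⟨w₂, j₂, hj₂, rfl⟩ := exists_mul_q0_add s d₂
  rw [weight_mul_add w₁ hj₁, weight_mul_add w₂ hj₂]
  rw [qS_eq] at h ⊢
  have hsum : w₁ * q0 s + j₁ + (w₂ * q0 s + j₂) = (w₁ + w₂) * q0 s + (j₁ + j₂) := by ring
  rw [hsum] at h ⊢
  by_cases hW : 2 * q0 s ≤ w₁ + w₂
  · have hd : (w₁ + w₂) * q0 s + (j₁ + j₂) - 2 * q0 s * q0 s
        = (w₁ + w₂ - 2 * q0 s) * q0 s + (j₁ + j₂) := by
      rw [Nat.sub_mul]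
      have := Nat.mul_le_mul_right (q0 s) hW
      omega
    have := weight_mul_add_le s (w₁ + w₂ - 2 * q0 s) (j₁ + j₂)
    rw [hd]
    omega
  · -- here `w₁ + w₂ = 2q₀ - 1`, so what is left is a single digit
    have hle : (w₁ + w₂) * q0 s + q0 s ≤ 2 * q0 s * q0 s := by
      simpa [add_one_mul] using Nat.mul_le_mul_right (q0 s) (show w₁ + w₂ + 1 ≤ 2 * q0 s by omega)
    have := weight_mul_add_le s 0 ((w₁ + w₂) * q0 s + (j₁ + j₂) - 2 * q0 s * q0 s)
    rw [zero_mul, zero_add] at this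
    omega

lemma mval_le_iff {s : ℕ} (h2 : 2 ≤ q0 s) (j k l : ℕ) (m : ℤ) :
    mval s j k l ≤ m ↔
      2 * (q0 s : ℤ) ^ 2 * (j + k + l) - (k + l) ≤ 2 * m * q0 s * (q0 s - 1) := by
  have hQ : (2 : ℚ) ≤ q0 s := by exact_mod_cast h2
  have hden : (0 : ℚ) < 2 * q0 s * (q0 s - 1) := by nlinarith
  rw [mval, Int.ceil_le, qS, show ((q0 s : ℚ) / (q0 s - 1)) *
      (j + k + l - (k + l) / ((2 * q0 s ^ 2 : ℕ) : ℚ))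
      = (2 * (q0 s : ℚ) ^ 2 * (j + k + l) - (k + l)) / (2 * q0 s * (q0 s - 1)) by
    have : (q0 s : ℚ) - 1 ≠ 0 := by linarith
    push_cast; field_simp, div_le_iff₀ hden, ← Int.cast_le (R := ℚ)]
  push_cast
  constructor <;> intro h <;> linarith

section MvalBounds

variable {s j k l : ℕ}

lemma add_one_le_mval (h2 : 2 ≤ q0 s) (ht : 1 ≤ j + k + l) :
    ((j + k + l : ℕ) : ℤ) + 1 ≤ mval s j k l := by
  rw [Int.add_one_le_iff, ← not_le, mval_le_iff h2]
  have hQ : (2 : ℤ) ≤ q0 s := by exact_mod_cast h2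
  have ht' : (1 : ℤ) ≤ j + k + l := by exact_mod_cast ht
  push_cast
  nlinarith

lemma add_two_le_mval (h2 : 2 ≤ q0 s) (hk : k < q0 s) (hl : l ≤ 1) (ht : q0 s ≤ j + k + l) :
    ((j + k + l : ℕ) : ℤ) + 2 ≤ mval s j k l := by
  rw [show ((j + k + l : ℕ) : ℤ) + 2 = (((j + k + l : ℕ) : ℤ) + 1) + 1 by ring,
    Int.add_one_le_iff, ← not_le, mval_le_iff h2]
  have hQ : (2 : ℤ) ≤ q0 s := by exact_mod_cast h2
  have ht' : (q0 s : ℤ) ≤ j + k + l := by exact_mod_cast ht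
  have hkl : (k : ℤ) + l ≤ q0 s := by omega
  push_cast
  nlinarith

lemma mval_le_add_one (h2 : 2 ≤ q0 s) (ht : j + k + l + 1 ≤ q0 s) :
    mval s j k l ≤ ((j + k + l : ℕ) : ℤ) + 1 := by
  rw [mval_le_iff h2]
  have hQ : (2 : ℤ) ≤ q0 s := by exact_mod_cast h2
  have ht' : (j : ℤ) + k + l + 1 ≤ q0 s := by exact_mod_cast ht
  push_cast
  nlinarith

lemma mval_le_add_two (h2 : 2 ≤ q0 s) (ht : j + k + l + 2 ≤ 2 * q0 s) :
    mval s j k l ≤ ((j + k + l : ℕ) : ℤ) + 2 := by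
  rw [mval_le_iff h2]
  have hQ : (2 : ℤ) ≤ q0 s := by exact_mod_cast h2
  have ht' : (j : ℤ) + k + l + 2 ≤ 2 * q0 s := by exact_mod_cast ht
  push_cast
  nlinarith

end MvalBounds

section Digits

variable {s j k l : ℕ}

lemma digits_lt_qS (hj : j < q0 s) (hk : k < q0 s) (hl : l ≤ 1) :
    (l + 2 * k) * q0 s + j < qS s := by
  have := Nat.mul_le_mul_right (q0 s) (show l + 2 * k + 1 ≤ 2 * q0 s by omega)
  rw [qS_eq, add_one_mul] at *
  omega

lemma exists_digits {d : ℕ} (hd : d < qS s) :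
    ∃ j k l, j < q0 s ∧ k < q0 s ∧ l ≤ 1 ∧ d = (l + 2 * k) * q0 s + j := by
  have hQ : 0 < q0 s := q0_pos s
  have hw : d / q0 s < 2 * q0 s := by rw [Nat.div_lt_iff_lt_mul hQ, ← qS_eq]; exact hd
  refine ⟨d % q0 s, d / q0 s / 2, d / q0 s % 2, Nat.mod_lt d hQ, by omega, by omega, ?_⟩
  rw [show d / q0 s % 2 + 2 * (d / q0 s / 2) = d / q0 s by omega, Nat.div_add_mod']

lemma level_digits (hj : j < q0 s) (hl : l ≤ 1) :
    level s ((l + 2 * k) * q0 s + j)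
      = j + k + l + if q0 s ≤ j + k + l ∧ ¬(j = q0 s - 1 ∧ l = 1) then 2 else 1 := by
  have hQ : 0 < q0 s := q0_pos s
  have hweight : weight s ((l + 2 * k) * q0 s + j) = j + k + l := by
    rw [weight_mul_add _ hj]; omega
  have hF2 : IsF2Residue s ((l + 2 * k) * q0 s + j) ↔ j = q0 s - 1 ∧ l = 1 := by
    rw [IsF2Residue, add_comm, Nat.add_mul_mod_self_right, Nat.mod_eq_of_lt hj,
      Nat.add_mul_div_right _ _ hQ, Nat.div_eq_of_lt hj]
    omega
  simp only [level, hweight, hF2]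

end Digits

lemma weight_add_one_le_level (s d : ℕ) : weight s d + 1 ≤ level s d := by
  unfold level; split <;> omega

lemma level_le_weight_add_two (s d : ℕ) : level s d ≤ weight s d + 2 := by
  unfold level; split <;> omega

lemma level_add_le (s d₁ d₂ : ℕ) : level s (d₁ + d₂) ≤ level s d₁ + level s d₂ := by
  have := weight_add_le s d₁ d₂
  have := level_le_weight_add_two s (d₁ + d₂)
  have := weight_add_one_le_level s d₁
  have := weight_add_one_le_level s d₂
  omega

lemma level_add_sub_qS_lt {s d₁ d₂ : ℕ} (h2 : 2 ≤ q0 s) (h : qS s ≤ d₁ + d₂) :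
    level s (d₁ + d₂ - qS s) < level s d₁ + level s d₂ := by
  have := weight_add_sub_qS_add_two_le h2 h
  have := level_le_weight_add_two s (d₁ + d₂ - qS s)
  have := weight_add_one_le_level s d₁
  have := weight_add_one_le_level s d₂
  omega

lemma level_zero (s : ℕ) : level s 0 = 1 := by
  simpa [(q0_pos s).ne'] using level_digits (s := s) (k := 0) (q0_pos s) (Nat.zero_le 1)

section Generators

variable {s j k l : ℕ}

lemma level_le_max_one_mval (h2 : 2 ≤ q0 s) (hj : j < q0 s) (hk : k < q0 s) (hl : l ≤ 1) :
    (level s ((l + 2 * k) * q0 s + j) : ℤ) ≤ max 1 (mval s j k l) := by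
  rw [level_digits hj hl]
  split_ifs with h
  · exact le_max_of_le_right (by exact_mod_cast add_two_le_mval h2 hk hl h.1)
  · rcases Nat.eq_zero_or_pos (j + k + l) with h0 | h0
    · simp [h0]
    · exact le_max_of_le_right (by exact_mod_cast add_one_le_mval h2 h0)

lemma max_one_mval_le_level (h2 : 2 ≤ q0 s) (hj : j < q0 s) (hk : k < q0 s) (hl : l ≤ 1)
    (hF2 : ¬(j = q0 s - 1 ∧ l = 1)) :
    max 1 (mval s j k l) ≤ (level s ((l + 2 * k) * q0 s + j) : ℤ) := by
  rw [level_digits hj hl]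
  split_ifs with h
  · exact max_le (by omega) (by exact_mod_cast mval_le_add_two h2 (by omega))
  · exact max_le (by omega) (by exact_mod_cast mval_le_add_one h2 (by omega))

lemma F1_subset_levelSet (h2 : 2 ≤ q0 s) : F1 s ⊆ levelSet (qS s) (level s) := by
  rintro n ⟨h, j, k, l, hl, hk, hj, hm, -, rfl⟩
  rw [Nat.sub_sub]
  exact sub_mem_levelSet (digits_lt_qS hj hk hl)
    (by exact_mod_cast (level_le_max_one_mval h2 hj hk hl).trans hm)
    (by exact_mod_cast (le_max_left 1 _).trans hm)

lemma F2_subset_levelSet : F2 s ⊆ levelSet (qS s) (level s) := by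
  rintro n ⟨h, hh1, hh2, rfl⟩
  obtain ⟨k, rfl⟩ : ∃ k, h = q0 s + 1 + k := ⟨h - (q0 s + 1), by omega⟩
  have hj : q0 s - 1 < q0 s := by omega
  rw [show 2 * (q0 s + 1 + k) - 2 * q0 s - 1 = 1 + 2 * k by omega, Nat.sub_sub]
  refine sub_mem_levelSet (digits_lt_qS hj (by omega) le_rfl) ?_ (by omega)
  rw [level_digits hj le_rfl]
  split_ifs <;> omega

lemma level_mul_sub_mem {d : ℕ} (h2 : 2 ≤ q0 s) (hd : d < qS s) :
    level s d * qS s - d ∈ F1 s ∪ F2 s := by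
  obtain ⟨j, k, l, hj, hk, hl, rfl⟩ := exists_digits hd
  have hlevel := level_digits (k := k) hj hl
  rw [← Nat.sub_sub]
  by_cases hF2 : j = q0 s - 1 ∧ l = 1
  · obtain ⟨rfl, rfl⟩ := hF2
    rw [if_neg (by omega)] at hlevel
    set h := level s ((1 + 2 * k) * q0 s + (q0 s - 1))
    refine Or.inr ⟨h, by omega, by omega, ?_⟩
    rw [show 2 * h - 2 * q0 s - 1 = 1 + 2 * k by omega]
  · refine Or.inl ⟨_, j, k, l, hl, hk, hj, max_one_mval_le_level h2 hj hk hl hF2, ?_, rfl⟩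
    split_ifs at hlevel <;> omega

end Generators

theorem closure_F1_union_F2 {s : ℕ} (h2 : 2 ≤ q0 s) :
    (AddSubmonoid.closure (F1 s ∪ F2 s) : Set ℕ) = levelSet (qS s) (level s) := by
  refine (closure_subset_levelSet (Set.union_subset (F1_subset_levelSet h2) F2_subset_levelSet)
    (fun d₁ _ d₂ _ _ => level_add_le s d₁ d₂) (fun _ _ _ _ h => level_add_sub_qS_lt h2 h)).antisymm
    (levelSet_subset ?_ (fun d _ => (weight_add_one_le_level s d).trans_lt' (Nat.succ_pos _))
      (fun d hd => AddSubmonoid.subset_closure (level_mul_sub_mem h2 hd)))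
  simpa [level_zero] using AddSubmonoid.subset_closure (level_mul_sub_mem h2 (qS_pos s))

lemma sum_level_digits_sub_one {s k l : ℕ} (hk : k < q0 s) (hl : l ≤ 1) :
    ∑ j ∈ range (q0 s), (level s ((l + 2 * k) * q0 s + j) - 1)
      = ∑ j ∈ range (q0 s), j + q0 s * (k + l) + k := by
  have hsplit : ∀ j ∈ range (q0 s), level s ((l + 2 * k) * q0 s + j) - 1
      = j + (k + l) + if q0 s ≤ j + k + l ∧ ¬(j = q0 s - 1 ∧ l = 1) then 1 else 0 := by
    intro j hj
    rw [level_digits (mem_range.mp hj) hl]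
    split_ifs <;> omega
  have hcount : #{j ∈ range (q0 s) | q0 s ≤ j + k + l ∧ ¬(j = q0 s - 1 ∧ l = 1)} = k := by
    rw [show {j ∈ range (q0 s) | q0 s ≤ j + k + l ∧ ¬(j = q0 s - 1 ∧ l = 1)}
        = Ico (q0 s - k - l) (q0 s - l) by ext j; simp only [mem_filter, mem_range, mem_Ico]; omega,
      Nat.card_Ico]
    omega
  rw [sum_congr rfl hsplit, sum_add_distrib, sum_add_distrib, sum_const, card_range, smul_eq_mul,
    sum_boole, hcount, Nat.cast_id]

theorem sum_level_sub_one (s : ℕ) : ∑ d ∈ range (qS s), (level s d - 1) = q0 s * (qS s - 1) := by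
  have hrow : ∀ k ∈ range (q0 s), ∑ l ∈ range 2, ∑ j ∈ range (q0 s),
      (level s ((k * 2 + l) * q0 s + j) - 1)
        = 2 * ∑ j ∈ range (q0 s), j + q0 s + (2 * q0 s + 2) * k := by
    intro k hk
    rw [sum_range_succ, sum_range_one, show k * 2 + 0 = 0 + 2 * k by ring,
      show k * 2 + 1 = 1 + 2 * k by ring,
      sum_level_digits_sub_one (mem_range.mp hk) (Nat.zero_le 1),
      sum_level_digits_sub_one (mem_range.mp hk) le_rfl]
    ring
  rw [qS_eq, show 2 * q0 s * q0 s = q0 s * 2 * q0 s by ring, sum_range_mul, sum_range_mul,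
    sum_congr rfl hrow, sum_add_distrib, sum_add_distrib]
  simp only [sum_const, card_range, smul_eq_mul]
  rw [← mul_sum _ (fun k => k)]
  have hgauss := sum_range_id_mul_two (q0 s)
  have hQ := q0_pos s
  have h1 : 1 ≤ q0 s * 2 * q0 s := by nlinarith
  zify [h1, hQ] at hgauss ⊢
  linear_combination (2 * (q0 s : ℤ) + 1) * hgauss

end Suzuki

/-- The complement in `ℕ` of `⟨F₁ ∪ F₂⟩` has exactly `g = q₀(q−1)` elements. -/
theorem stmt8 (s : ℕ) (hs : 1 ≤ s) :
    ((AddSubmonoid.closure (F1 s ∪ F2 s) : Set ℕ))ᶜ.ncard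
      = q0 s * (qS s - 1) := by
  rw [Suzuki.closure_F1_union_F2 (Suzuki.two_le_q0 hs), ncard_compl_levelSet (Suzuki.qS_pos s),
    Suzuki.sum_level_sub_one]
end

section
/- Suppose (h,j,k,ℓ) satisfies ℓ ∈ {0,1}, k ∈ {0,…,q_0−1}, j ∈ {0,…,q_0−1}, max{1, m_{j,k,ℓ}} ≤ h ≤ 2q_0, and additionally j = ⌊(2h−(ℓ+2k)−2)/2⌋ (i.e., δ(n_{h,j,k,ℓ}) = 0). Then h ≤ q_0, 2k+ℓ ≤ 2h−2, and n_{h,j,k,ℓ} = hq − (2k+ℓ)q_0 − ⌊(2h−(2k+ℓ)−2)/2⌋ is an element of G_1. -/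
/-- If `δ(n_{h,j,k,ℓ}) = 0`, i.e. `j = ⌊(2h−(ℓ+2k)−2)/2⌋`, then `h ≤ q₀`,
`2k+ℓ ≤ 2h−2`, and `n_{h,j,k,ℓ}` is an element of `G₁`. -/
theorem stmt9 (s : ℕ) (hs : 1 ≤ s) (h j k l : ℕ)
    (hl : l ≤ 1) (hk : k < q0 s) (hj : j < q0 s)
    (hhm : max 1 (mval s j k l) ≤ (h : ℤ)) (hh : h ≤ 2 * q0 s)
    (hdelta : (j : ℤ) = ⌊(2 * (h : ℚ) - ((l : ℚ) + 2 * k) - 2) / 2⌋) :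
    h ≤ q0 s ∧ 2 * k + l ≤ 2 * h - 2 ∧
    h * qS s - (l + 2 * k) * q0 s - j ∈ G1 s := by
  have h1 : 1 ≤ h := by
    have : (1 : ℤ) ≤ (h : ℤ) := le_trans (le_max_left _ _) hhm
    exact_mod_cast this
  -- compute j from the floor
  have jeq : (j : ℤ) = (h : ℤ) - 1 - k - l := by
    interval_cases l
    · rw [hdelta]
      have : (2 * (h : ℚ) - ((0 : ℕ) + 2 * k) - 2) / 2
          = (((h : ℤ) - 1 - k : ℤ) : ℚ) := by push_cast; ring
      rw [this, Int.floor_intCast]; ring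
    · rw [hdelta]
      have : (2 * (h : ℚ) - ((1 : ℕ) + 2 * k) - 2) / 2
          = (((h : ℤ) - 2 - k : ℤ) : ℚ) + 1 / 2 := by push_cast; ring
      rw [this, Int.floor_intCast_add]
      norm_num
      push_cast
      ring
  have hnat : j + 1 + k + l = h := by omega
  -- bound on h
  have hq0n : 2 ≤ q0 s := by
    have := Nat.pow_le_pow_right (by norm_num : 1 ≤ 2) hs
    simpa [q0] using this
  have hq0 : (2 : ℚ) ≤ (q0 s : ℚ) := by exact_mod_cast hq0n
  have hqSpos : (0 : ℚ) < (qS s : ℚ) := by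
    have : 0 < qS s := by
      have h0 : 0 < q0 s := by omega
      simp only [qS]
      positivity
    exact_mod_cast this
  have hle : h ≤ q0 s := by
    by_contra hcon
    push_neg at hcon
    have hH : (q0 s : ℚ) + 1 ≤ (h : ℚ) := by exact_mod_cast hcon
    have hceil : mval s j k l ≤ (h : ℤ) := le_trans (le_max_right _ _) hhm
    have hval : ((q0 s : ℚ) / ((q0 s : ℚ) - 1)) *
        ((j : ℚ) + (k : ℚ) + (l : ℚ) - ((k : ℚ) + (l : ℚ)) / (qS s : ℚ)) ≤ (h : ℚ) := by
      have := Int.ceil_le.mp hceil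
      exact_mod_cast this
    have hjq : (j : ℚ) + k + l = (h : ℚ) - 1 := by
      have h2 : ((j : ℤ) : ℚ) = (((h : ℤ) - 1 - k - l : ℤ) : ℚ) := by exact_mod_cast jeq
      push_cast at h2
      linarith
    have hkl : (k : ℚ) + l ≤ (q0 s : ℚ) := by
      have : k + l ≤ q0 s := by omega
      exact_mod_cast this
    have hklnn : (0 : ℚ) ≤ (k : ℚ) + l := by positivity
    have hqs : (qS s : ℚ) = 2 * (q0 s : ℚ) ^ 2 := by
      simp only [qS]; push_cast; ring
    -- a * ((k+l)/qS) ≤ 1/2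
    have ht2 : (q0 s : ℚ) * (((k : ℚ) + (l : ℚ)) / (qS s : ℚ)) ≤ 1 / 2 := by
      rw [mul_div_assoc', div_le_iff₀ hqSpos, hqs]
      nlinarith
    have hden : (0 : ℚ) < (q0 s : ℚ) - 1 := by linarith
    rw [hjq, div_mul_eq_mul_div, div_le_iff₀ hden] at hval
    have hexp : (q0 s : ℚ) * ((h : ℚ) - 1 - ((k : ℚ) + (l : ℚ)) / (qS s : ℚ))
        = (q0 s : ℚ) * ((h : ℚ) - 1)
          - (q0 s : ℚ) * (((k : ℚ) + (l : ℚ)) / (qS s : ℚ)) := by ring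
    rw [hexp] at hval
    nlinarith
  -- 2k + l ≤ 2h - 2
  have hjdiv : j = (2 * h - (2 * k + l) - 2) / 2 := by omega
  refine ⟨hle, by omega, ⟨h, 2 * k + l, h1, hle, by omega, ?_⟩⟩
  rw [show l + 2 * k = 2 * k + l from by ring, ← hjdiv]
end

section
/- For every parameter tuple (h,j,k,1) with k ∈ {0,…,q_0−1}, j ∈ {0,…,q_0−1}, and max{1, m_{j,k,1}} ≤ h ≤ 2q_0, the integer n_{h,j,k,1} = hq − (1+2k)q_0 − j belongs to the additive submonoid of ℕ generated by G_1. -/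
/-!
Write `n_{h,j,k,1} = (h₀q − (1+2k)q₀ − j) + (h − h₀)q` with `q = ν_{1,0} ∈ G₁`, where `h₀ = j+k+2`
if `j+k+2 ≤ q₀` and `h₀ = j+k+3` otherwise; the bound `h ≥ m_{j,k,1}` is exactly what forces
`h ≥ h₀`. In the first case the remainder is the generator `ν_{j+k+2,2k+1}`, in the second it is
`ν_{a,1} + ν_{q₀,2k}` with `a = j+k+3−q₀`.
-/

section

variable {s : ℕ}

lemma two_le_q0 (hs : 1 ≤ s) : 2 ≤ q0 s :=
  Nat.pow_le_pow_right two_pos hs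

lemma qS_mem_G1 : qS s ∈ G1 s :=
  ⟨1, 0, le_rfl, Nat.one_le_two_pow, le_rfl, by simp⟩

/-- The correction term `(k+ℓ)/q` shifts `q₀/(q₀-1)·(j+k+ℓ)` by at most `1/(2(q₀-1))`, which an
integral strict inequality absorbs. -/
lemma lt_mval_of_mul_lt {j k l : ℕ} {n : ℤ} (hs : 1 ≤ s) (hkl : k + l ≤ q0 s)
    (hn : n * (q0 s - 1) < q0 s * (j + k + l)) : n < mval s j k l := by
  have hQ : (2 : ℚ) ≤ q0 s := by exact_mod_cast two_le_q0 hs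
  have hkl' : ((k : ℚ) + l) ≤ q0 s := by exact_mod_cast hkl
  have hn' : (n : ℚ) * (q0 s - 1) + 1 ≤ q0 s * (j + k + l) := by exact_mod_cast hn
  have hcorr : (q0 s : ℚ) * ((k + l) / qS s) ≤ 1 / 2 := by
    rw [qS, Nat.cast_mul, Nat.cast_pow, Nat.cast_two, mul_div_assoc',
      div_le_div_iff₀ (by positivity) two_pos]
    nlinarith
  rw [mval, Int.lt_ceil, div_mul_eq_mul_div, lt_div_iff₀ (by linarith)]
  linarith

lemma mul_qS_sub_mem_closure_G1_of_le {h₀ h c : ℕ} (hc : c ≤ h₀ * qS s) (hh : h₀ ≤ h)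
    (hmem : h₀ * qS s - c ∈ AddSubmonoid.closure (G1 s)) :
    h * qS s - c ∈ AddSubmonoid.closure (G1 s) := by
  have hsplit : h * qS s - c = (h₀ * qS s - c) + (h - h₀) • qS s := by
    rw [smul_eq_mul, ← Nat.sub_add_comm hc, ← Nat.add_mul, Nat.add_sub_cancel' hh]
  rw [hsplit]
  exact add_mem hmem (nsmul_mem (AddSubmonoid.subset_closure qS_mem_G1) _)

lemma mul_qS_sub_mem_G1 {j k : ℕ} (hjk : j + k + 2 ≤ q0 s) :
    (j + k + 2) * qS s - ((1 + 2 * k) * q0 s + j) ∈ G1 s := by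
  refine ⟨j + k + 2, 2 * k + 1, by omega, hjk, by omega, ?_⟩
  rw [show (2 * (j + k + 2) - (2 * k + 1) - 2) / 2 = j by omega, Nat.sub_sub, add_comm (2 * k)]

lemma mul_qS_sub_mem_closure_G1 {j k : ℕ} (hk : k < q0 s) (hlo : q0 s ≤ j + k + 1)
    (hhi : j + k + 3 ≤ 2 * q0 s) :
    (j + k + 3) * qS s - ((1 + 2 * k) * q0 s + j) ∈ AddSubmonoid.closure (G1 s) := by
  set Q := q0 s
  set a := j + k + 3 - Q
  have hg₁ : a * qS s - 1 * Q - (a - 2) ∈ G1 s :=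
    ⟨a, 1, by omega, by omega, by omega, by rw [show (2 * a - 1 - 2) / 2 = a - 2 by omega]⟩
  have hg₂ : Q * qS s - 2 * k * Q - (Q - k - 1) ∈ G1 s :=
    ⟨Q, 2 * k, by omega, le_rfl, by omega,
      by rw [show (2 * Q - 2 * k - 2) / 2 = Q - k - 1 by omega]⟩
  have hq : qS s = 2 * Q ^ 2 := rfl
  have hb₁ : Q + a ≤ a * qS s := by
    rw [hq]; nlinarith [Nat.mul_le_mul_left Q (show 1 ≤ a by omega)]
  have hb₂ : 2 * k * Q + Q ≤ Q * qS s := by rw [hq]; nlinarith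
  have hsplit : (j + k + 3) * qS s - ((1 + 2 * k) * Q + j) =
      (a * qS s - 1 * Q - (a - 2)) + (Q * qS s - 2 * k * Q - (Q - k - 1)) := by
    have : (j + k + 3) * qS s = a * qS s + Q * qS s := by
      rw [← Nat.add_mul, Nat.sub_add_cancel (by omega)]
    rw [this, add_mul, one_mul]
    omega
  rw [hsplit]
  exact add_mem (AddSubmonoid.subset_closure hg₁) (AddSubmonoid.subset_closure hg₂)

end

theorem stmt11_general (s : ℕ) (hs : 1 ≤ s) (h j k : ℕ)
    (hk : k < q0 s)
    (hhm : max 1 (mval s j k 1) ≤ (h : ℤ)) (hh : h ≤ 2 * q0 s) :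
    h * qS s - (1 + 2 * k) * q0 s - j ∈ AddSubmonoid.closure (G1 s) := by
  have hQ := two_le_q0 hs
  have hQQ : q0 s ≤ q0 s ^ 2 := Nat.le_self_pow two_ne_zero _
  have hmh : mval s j k 1 ≤ h := le_of_max_le_right hhm
  rw [Nat.sub_sub]
  by_cases hjk : j + k + 2 ≤ q0 s
  · have hlt : ((j + k + 1 : ℕ) : ℤ) < mval s j k 1 :=
      lt_mval_of_mul_lt hs hk (by push_cast; nlinarith)
    have hmem := AddSubmonoid.subset_closure (mul_qS_sub_mem_G1 hjk)
    exact mul_qS_sub_mem_closure_G1_of_le (by simp only [qS]; nlinarith) (by omega) hmem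
  · have hlt : ((j + k + 2 : ℕ) : ℤ) < mval s j k 1 :=
      lt_mval_of_mul_lt hs hk (by push_cast; nlinarith)
    have hmem := mul_qS_sub_mem_closure_G1 (j := j) hk (by omega) (by omega)
    exact mul_qS_sub_mem_closure_G1_of_le (by simp only [qS]; nlinarith) (by omega) hmem

/-- Every `n_{h,j,k,1} = hq − (1+2k)q₀ − j ∈ F₁` belongs to `⟨G₁⟩`. -/
theorem stmt11 (s : ℕ) (hs : 1 ≤ s) (h j k : ℕ)
    (hk : k < q0 s) (hj : j < q0 s)
    (hhm : max 1 (mval s j k 1) ≤ (h : ℤ)) (hh : h ≤ 2 * q0 s) :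
    h * qS s - (1 + 2 * k) * q0 s - j ∈ AddSubmonoid.closure (G1 s) :=
  stmt11_general s hs h j k hk hhm hh
end

section
/- The additive submonoid of ℕ generated by G = G_1 ∪ F_2 equals the additive submonoid of ℕ generated by F_1 ∪ F_2. -/
lemma q0_ge (s : ℕ) (hs : 1 ≤ s) : 2 ≤ q0 s := by
  have := Nat.one_lt_two_pow_iff (n := s)
  simp [q0]
  omega

lemma mval_eq (s j k l : ℕ) (hs : 1 ≤ s) :
    mval s j k l =
      ⌈((q0 s : ℚ) * ((j + k + l) * (qS s : ℚ) - (k + l)) / (((q0 s : ℚ) - 1) * (qS s : ℚ)))⌉ := by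
  have h2 : (2:ℚ) ≤ (q0 s : ℚ) := by exact_mod_cast q0_ge s hs
  have hq : (0:ℚ) < (qS s : ℚ) := by
    have : 0 < qS s := by have := q0_ge s hs; simp [qS]; positivity
    exact_mod_cast this
  unfold mval
  congr 1
  field_simp

lemma mval_ge (s j k l : ℕ) (hs : 1 ≤ s) (h1 : 1 ≤ j + k + l) :
    ((j : ℤ) + k + l + 1) ≤ mval s j k l := by
  rw [mval_eq s j k l hs]
  have h2 : (2:ℚ) ≤ (q0 s : ℚ) := by exact_mod_cast q0_ge s hs
  have hqq : (qS s : ℚ) = 2 * (q0 s : ℚ)^2 := by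
    simp [qS]
  have hx : (1:ℚ) ≤ (j:ℚ) + k + l := by exact_mod_cast h1
  have hkl : (k:ℚ) + l ≤ (j:ℚ) + k + l := by
    have : (0:ℚ) ≤ (j:ℚ) := by positivity
    linarith
  have h0 : (0:ℚ) < ((q0 s : ℚ) - 1) * (qS s : ℚ) := by
    rw [hqq]; nlinarith
  rw [show ((j : ℤ) + k + l + 1) = ((j : ℤ) + k + l) + 1 by ring, Int.add_one_le_iff,
    Int.lt_ceil, lt_div_iff₀ h0]
  push_cast
  rw [hqq]
  set Q := (q0 s : ℚ)
  nlinarith [sq_nonneg Q, mul_le_mul_of_nonneg_left hkl (by linarith : (0:ℚ) ≤ Q),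
    mul_le_mul_of_nonneg_left hx (by nlinarith : (0:ℚ) ≤ 2*Q^2 - Q)]

lemma mval_ge2 (s j k l : ℕ) (hs : 1 ≤ s) (hk : k < q0 s) (hl : l ≤ 1)
    (h1 : q0 s ≤ j + k + l) :
    ((j : ℤ) + k + l + 2) ≤ mval s j k l := by
  rw [mval_eq s j k l hs]
  have h2 : (2:ℚ) ≤ (q0 s : ℚ) := by exact_mod_cast q0_ge s hs
  have hqq : (qS s : ℚ) = 2 * (q0 s : ℚ)^2 := by
    simp [qS]
  have hx : (q0 s : ℚ) ≤ (j:ℚ) + k + l := by exact_mod_cast h1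
  have hkl : (k:ℚ) + l ≤ (q0 s : ℚ) := by
    have : (k:ℚ) + 1 ≤ (q0 s : ℚ) := by exact_mod_cast hk
    have : (l:ℚ) ≤ 1 := by exact_mod_cast hl
    linarith
  have h0 : (0:ℚ) < ((q0 s : ℚ) - 1) * (qS s : ℚ) := by
    rw [hqq]; nlinarith
  rw [show ((j : ℤ) + k + l + 2) = ((j : ℤ) + k + l + 1) + 1 by ring, Int.add_one_le_iff,
    Int.lt_ceil, lt_div_iff₀ h0]
  push_cast
  rw [hqq]
  set Q := (q0 s : ℚ)
  -- need: (x+1)*((Q-1)*2Q²) < Q*(x*2Q² - (k+l)), i.e. Q*(k+l) < (x-Q+1)*2Q²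
  nlinarith [mul_le_mul_of_nonneg_left hkl (by linarith : (0:ℚ) ≤ Q),
    mul_le_mul_of_nonneg_left hx (by nlinarith : (0:ℚ) ≤ 2*Q^2),
    sq_nonneg Q]

lemma mval_le (s j k l : ℕ) (hs : 1 ≤ s) (h1 : j + k + l + 1 ≤ q0 s) :
    mval s j k l ≤ ((j : ℤ) + k + l + 1) := by
  rw [mval_eq s j k l hs]
  have h2 : (2:ℚ) ≤ (q0 s : ℚ) := by exact_mod_cast q0_ge s hs
  have hqq : (qS s : ℚ) = 2 * (q0 s : ℚ)^2 := by
    simp [qS]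
  have hx : (j:ℚ) + k + l + 1 ≤ (q0 s : ℚ) := by exact_mod_cast h1
  have hkl : (0:ℚ) ≤ (k:ℚ) + l := by positivity
  have h0 : (0:ℚ) < ((q0 s : ℚ) - 1) * (qS s : ℚ) := by
    rw [hqq]; nlinarith
  rw [Int.ceil_le, div_le_iff₀ h0]
  push_cast
  rw [hqq]
  set Q := (q0 s : ℚ)
  nlinarith [mul_le_mul_of_nonneg_left hx (by linarith : (0:ℚ) ≤ Q),
    mul_le_mul_of_nonneg_left hkl (by linarith : (0:ℚ) ≤ Q), sq_nonneg Q]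


/-- Generators of `G1` in parametric form. -/
lemma gen1_mem (s j k l : ℕ) (hl : l ≤ 1) (hq : j + k + l + 1 ≤ q0 s) :
    (j + k + l + 1) * qS s - ((l + 2 * k) * q0 s + j) ∈ G1 s := by
  refine ⟨j + k + l + 1, 2 * k + l, by omega, hq, by omega, ?_⟩
  have e1 : (l + 2 * k) = (2 * k + l) := by omega
  have e2 : (2 * (j + k + l + 1) - (2 * k + l) - 2) / 2 = j := by omega
  rw [e1, e2, Nat.sub_sub]

lemma gen2_mem (s k : ℕ) (hs : 1 ≤ s) (hk : k + 1 ≤ q0 s) :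
    (q0 s + k + 1) * qS s - ((1 + 2 * k) * q0 s + (q0 s - 1)) ∈ F2 s := by
  refine ⟨q0 s + k + 1, by omega, by omega, ?_⟩
  have e1 : (2 * (q0 s + k + 1) - 2 * q0 s - 1) = 1 + 2 * k := by omega
  rw [e1, Nat.sub_sub]

lemma defect_le (s j k l a : ℕ) (hs : 1 ≤ s) (hk : k < q0 s) (hj : j < q0 s)
    (hl : l ≤ 1) (ha : 1 ≤ a) : (l + 2 * k) * q0 s + j ≤ a * qS s := by
  have h2 : 2 ≤ q0 s := q0_ge s hs
  have h1 : (l + 2 * k) * q0 s + j < 2 * q0 s ^ 2 := by nlinarith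
  have : qS s ≤ a * qS s := Nat.le_mul_of_pos_left _ ha
  simp only [qS] at *
  omega

lemma add_aux (q a b d1 d2 : ℕ) (h1 : d1 ≤ a * q) (h2 : d2 ≤ b * q) :
    (a * q - d1) + (b * q - d2) = (a + b) * q - (d1 + d2) := by
  have h3 : d1 + d2 ≤ (a + b) * q := by rw [add_mul]; exact Nat.add_le_add h1 h2
  zify [h1, h2, h3]
  ring

lemma qS_mem (s : ℕ) : qS s ∈ AddSubmonoid.closure (G1 s ∪ F2 s) :=
  AddSubmonoid.subset_closure (Set.mem_union_left _ ⟨1, 0, le_rfl, Nat.one_le_two_pow, by omega, by simp⟩)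

lemma mul_qS_mem (s c : ℕ) : c * qS s ∈ AddSubmonoid.closure (G1 s ∪ F2 s) := by
  simpa [smul_eq_mul] using (AddSubmonoid.closure (G1 s ∪ F2 s)).nsmul_mem (qS_mem s) c

lemma G1_subset_F1 (s : ℕ) (hs : 1 ≤ s) : G1 s ⊆ F1 s := by
  rintro n ⟨h, k, h1, hq, hk, rfl⟩
  have h2 := q0_ge s hs
  obtain ⟨j1, hj1⟩ : ∃ j1, (2 * h - k - 2) / 2 = j1 := ⟨_, rfl⟩
  obtain ⟨k1, hk1⟩ : ∃ k1, k / 2 = k1 := ⟨_, rfl⟩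
  obtain ⟨l1, hl1⟩ : ∃ l1, k % 2 = l1 := ⟨_, rfl⟩
  refine ⟨h, j1, k1, l1, by omega, by omega, by omega, ?_, by omega, ?_⟩
  · refine max_le (by exact_mod_cast h1) ?_
    have h3 := mval_le s j1 k1 l1 hs (by omega)
    have h5 : (j1 : ℤ) + k1 + l1 + 1 = (h : ℤ) := by
      exact_mod_cast congrArg (Nat.cast : ℕ → ℤ) (show j1 + k1 + l1 + 1 = h by omega)
    omega
  · rw [show (l1 + 2 * k1) = k from by omega, ← hj1]

/-- `⟨G₁ ∪ F₂⟩ = ⟨F₁ ∪ F₂⟩`. -/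
theorem stmt12 (s : ℕ) (hs : 1 ≤ s) :
    AddSubmonoid.closure (G1 s ∪ F2 s) = AddSubmonoid.closure (F1 s ∪ F2 s) := by
  have h2 := q0_ge s hs
  apply le_antisymm
  · exact AddSubmonoid.closure_mono (Set.union_subset_union_left _ (G1_subset_F1 s hs))
  · rw [AddSubmonoid.closure_le]
    rintro n (⟨h, j, k, l, hl, hk, hj, hm, hh2, rfl⟩ | hn)
    swap
    · exact AddSubmonoid.subset_closure (Set.mem_union_right _ hn)
    have hh1 : 1 ≤ h := by
      have := le_trans (le_max_left 1 (mval s j k l)) hm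
      exact_mod_cast this
    have hmv : mval s j k l ≤ (h : ℤ) := le_trans (le_max_right _ _) hm
    rw [Nat.sub_sub]
    show h * qS s - ((l + 2 * k) * q0 s + j) ∈ _
    rcases Nat.eq_zero_or_pos (j + k + l) with hx0 | hx1
    · obtain ⟨hj0, hk0, hl0⟩ : j = 0 ∧ k = 0 ∧ l = 0 := by omega
      subst hj0; subst hk0; subst hl0
      simpa using mul_qS_mem s h
    · have hxh : j + k + l + 1 ≤ h := by
        have := le_trans (mval_ge s j k l hs hx1) hmv
        exact_mod_cast this
      by_cases hxq : j + k + l + 1 ≤ q0 s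
      · -- single generator
        have hD : (l + 2 * k) * q0 s + j ≤ (j + k + l + 1) * qS s :=
          defect_le s j k l _ hs hk hj hl (by omega)
        have key : h * qS s - ((l + 2 * k) * q0 s + j) =
            ((j + k + l + 1) * qS s - ((l + 2 * k) * q0 s + j)) +
              (h - (j + k + l + 1)) * qS s := by
          have e : h * qS s = (j + k + l + 1) * qS s + (h - (j + k + l + 1)) * qS s := by
            rw [← add_mul]; congr 1; omega
          omega
        rw [key]
        exact AddSubmonoid.add_mem _
          (AddSubmonoid.subset_closure (Set.mem_union_left _ (gen1_mem s j k l hl hxq)))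
          (mul_qS_mem s _)
      · have hxQ : q0 s ≤ j + k + l := by omega
        by_cases hxtop : j + k + l = 2 * q0 s - 1
        · -- top case: element of F2 exactly
          have hjv : j = q0 s - 1 := by omega
          have hkv : k = q0 s - 1 := by omega
          have hlv : l = 1 := by omega
          have hxh2 : (j : ℤ) + k + l + 2 ≤ (h : ℤ) :=
            le_trans (mval_ge2 s j k l hs hk hl hxQ) hmv
          have hxh2' : j + k + l + 2 ≤ h + 1 := by exact_mod_cast by linarith
          have hheq : h = 2 * q0 s := by omega
          have key : h * qS s - ((l + 2 * k) * q0 s + j) =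
              (q0 s + (q0 s - 1) + 1) * qS s -
                ((1 + 2 * (q0 s - 1)) * q0 s + (q0 s - 1)) := by
            rw [show l + 2 * k = 1 + 2 * (q0 s - 1) from by omega,
              show j = q0 s - 1 from hjv, show h = q0 s + (q0 s - 1) + 1 from by omega]
          rw [key]
          exact AddSubmonoid.subset_closure
            (Set.mem_union_right _ (gen2_mem s (q0 s - 1) hs (by omega)))
        · -- split into two generators
          have hxh2 : (j : ℤ) + k + l + 2 ≤ (h : ℤ) :=
            le_trans (mval_ge2 s j k l hs hk hl hxQ) hmv
          have hxh' : j + k + l + 2 ≤ h := by exact_mod_cast hxh2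
          obtain ⟨j1, k1, l1, hj1, hk1, hl1, hs1, hs2⟩ :
              ∃ j1 k1 l1 : ℕ, j1 ≤ j ∧ k1 ≤ k ∧ l1 ≤ l ∧
                j1 + k1 + l1 + 1 ≤ q0 s ∧ (j - j1) + (k - k1) + (l - l1) + 1 ≤ q0 s :=
            ⟨q0 s - 1 - l - min k (q0 s - 1 - l), min k (q0 s - 1 - l), l,
              by omega, by omega, le_rfl, by omega, by omega⟩
          set a := j1 + k1 + l1 + 1 with ha
          set b := (j - j1) + (k - k1) + (l - l1) + 1 with hb
          have hD1 : (l1 + 2 * k1) * q0 s + j1 ≤ a * qS s :=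
            defect_le s j1 k1 l1 a hs (by omega) (by omega) (by omega) (by omega)
          have hD2 : ((l - l1) + 2 * (k - k1)) * q0 s + (j - j1) ≤ b * qS s :=
            defect_le s (j - j1) (k - k1) (l - l1) b hs (by omega) (by omega) (by omega)
              (by omega)
          have hDsum : (l + 2 * k) * q0 s + j =
              ((l1 + 2 * k1) * q0 s + j1) +
                (((l - l1) + 2 * (k - k1)) * q0 s + (j - j1)) := by
            zify [hj1, hk1, hl1]
            ring
          have key : h * qS s - ((l + 2 * k) * q0 s + j) =
              ((a * qS s - ((l1 + 2 * k1) * q0 s + j1)) +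
                (b * qS s - (((l - l1) + 2 * (k - k1)) * q0 s + (j - j1)))) +
                (h - a - b) * qS s := by
            have e : h * qS s = a * qS s + b * qS s + (h - a - b) * qS s := by
              rw [← add_mul, ← add_mul]; congr 1; omega
            omega
          rw [key]
          exact AddSubmonoid.add_mem _
            (AddSubmonoid.add_mem _
              (AddSubmonoid.subset_closure
                (Set.mem_union_left _ (gen1_mem s j1 k1 l1 (by omega) hs1)))
              (AddSubmonoid.subset_closure
                (Set.mem_union_left _ (gen1_mem s (j - j1) (k - k1) (l - l1) (by omega) hs2))))
            (mul_qS_mem s _)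
end

section
/- For every h ∈ {1,…,q_0} and k ∈ {0,…,2h−2}, the element ν_{h,k} = hq − kq_0 − ⌊(2h−k−2)/2⌋ of G_1 does not belong to the additive submonoid of ℕ generated by G ∖ {ν_{h,k}}, where G = G_1 ∪ F_2. -/
/-!
Write an element of `G₁ ∪ F₂` as `h q − k q₀ − (h − 1 − ⌈k/2⌉)`. A sum of `m` such elements then
has the shape `a q − k q₀ − (a − m − c)` with `a = ∑ hᵢ`, `k = ∑ kᵢ`, `c = ∑ ⌈kᵢ/2⌉`, so that
`k ≤ 2c` and `c + m ≤ a`; such a sum lies in `[a q − 2q₀(a − m), a q]`. Suppose `ν_{h,k}` is a sum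
of `m ≥ 2` generators. Since `h ≤ q₀`, the element `ν_{h,k}` lies strictly above `(h − 1) q`, and a
sum with `m ≥ 2` and `a > h` lies strictly above `h q`; hence `a = h`. Comparing both shapes modulo
`q₀` then forces `k` to agree and `m + c = 1 + ⌈k/2⌉`, contradicting `c ≥ ⌈k/2⌉`, `m ≥ 2`.
-/

/-- `x = a q − k Q − (a − m − c)`, with the subtraction moved to the left-hand side. -/
def HasShape (Q q x a k c m : ℕ) : Prop :=
  k ≤ 2 * c ∧ c + m ≤ a ∧ x + k * Q + a = a * q + m + c

namespace HasShape

variable {Q q x y a a' b k k' c c' m m' : ℕ}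

theorem zero : HasShape Q q 0 0 0 0 0 := by
  simp [HasShape]

theorem add (hx : HasShape Q q x a k c m) (hy : HasShape Q q y a' k' c' m') :
    HasShape Q q (x + y) (a + a') (k + k') (c + c') (m + m') := by
  obtain ⟨hx₁, hx₂, hx₃⟩ := hx
  obtain ⟨hy₁, hy₂, hy₃⟩ := hy
  exact ⟨by omega, by omega, by linarith⟩

theorem le_mul (hx : HasShape Q q x a k c m) : x ≤ a * q := by
  obtain ⟨-, hx₂, hx₃⟩ := hx
  nlinarith [Nat.zero_le (k * Q)]

theorem mul_add_le (hx : HasShape Q q x a k c m) (hQ : 1 ≤ Q) :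
    a * q + 2 * Q * m ≤ x + 2 * Q * a := by
  obtain ⟨hx₁, hx₂, hx₃⟩ := hx
  nlinarith [Nat.mul_le_mul_right Q hx₁]

theorem mul_lt_add (hx : HasShape Q q x a k c 1) (haQ : a ≤ Q) (hq : 2 * Q ^ 2 ≤ q) :
    a * q < x + q := by
  have ha : 1 ≤ a := by have := hx.2.1; omega
  have := hx.mul_add_le (ha.trans haQ)
  nlinarith [Nat.mul_le_mul_left (2 * Q) haQ]

theorem lt_mul (hx : HasShape Q q x a k c m) (hm : 2 ≤ m) (hba : b < a) (hbQ : b ≤ Q)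
    (hq : 2 * Q ^ 2 ≤ q) (hQ : 1 ≤ Q) : b * q < x := by
  have hlow := hx.mul_add_le hQ
  obtain ⟨d, rfl⟩ : ∃ d, a = b + 1 + d := ⟨a - b - 1, by omega⟩
  have hdq : d * (2 * Q) ≤ d * q := Nat.mul_le_mul_left d (by nlinarith)
  nlinarith [Nat.mul_le_mul_left (2 * Q) hbQ]

theorem eq_of_height_eq (hx : HasShape Q q x a k c m) (hx' : HasShape Q q x a k' c' m')
    (haQ : a ≤ Q) (hm : 1 ≤ m) (hm' : 1 ≤ m') : k = k' ∧ m + c = m' + c' := by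
  obtain ⟨-, hx₂, hx₃⟩ := hx
  obtain ⟨-, hx₂', hx₃'⟩ := hx'
  have hkQ : k * Q + m' + c' = k' * Q + m + c := by omega
  rcases lt_trichotomy k k' with hk | rfl | hk
  · nlinarith [Nat.mul_le_mul_right Q hk]
  · omega
  · nlinarith [Nat.mul_le_mul_right Q hk]

theorem count_le_one (hx : HasShape Q q x a k' c m) (hν : HasShape Q q x b k ((k + 1) / 2) 1)
    (hbQ : b ≤ Q) (hq : 2 * Q ^ 2 ≤ q) : m ≤ 1 := by
  by_contra! hm
  have hQ : 1 ≤ Q := by have := hν.2.1; omega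
  rcases lt_trichotomy a b with hab | rfl | hba
  · nlinarith [hx.le_mul, hν.mul_lt_add hbQ hq, Nat.mul_le_mul_right q hab]
  · obtain ⟨rfl, hmc⟩ := hx.eq_of_height_eq hν hbQ (by omega) le_rfl
    have := hx.1
    omega
  · have := hx.lt_mul hm hba hbQ hq hQ
    have := hν.le_mul
    omega

end HasShape

theorem hasShape_multiset_sum {Q q : ℕ} {l : Multiset ℕ}
    (hl : ∀ g ∈ l, ∃ a k c, HasShape Q q g a k c 1) :
    ∃ a k c, HasShape Q q l.sum a k c (Multiset.card l) := by
  induction l using Multiset.induction with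
  | empty => exact ⟨0, 0, 0, HasShape.zero⟩
  | cons g l ih =>
    obtain ⟨a, k, c, hg⟩ := hl g (Multiset.mem_cons_self g l)
    obtain ⟨a', k', c', hl'⟩ := ih fun g' hg' => hl g' (Multiset.mem_cons_of_mem hg')
    rw [Multiset.sum_cons, Multiset.card_cons, add_comm _ 1]
    exact ⟨_, _, _, hg.add hl'⟩

theorem hasShape_single {Q h k f : ℕ} (hf : f + 1 + (k + 1) / 2 = h) (hk : k < 2 * Q) (hfQ : f < Q) :
    HasShape Q (2 * Q ^ 2) (h * (2 * Q ^ 2) - k * Q - f) h k ((k + 1) / 2) 1 := by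
  have hkQ : k * Q + f < h * (2 * Q ^ 2) := by
    have hh : 1 ≤ h := by omega
    nlinarith [Nat.mul_le_mul_right Q hk, Nat.mul_le_mul_right (2 * Q ^ 2) hh]
  exact ⟨by omega, by omega, by omega⟩

theorem hasShape_of_G1 {s h k : ℕ} (hh₁ : 1 ≤ h) (hh₂ : h ≤ q0 s) (hk : k ≤ 2 * h - 2) :
    HasShape (q0 s) (qS s) (h * qS s - k * q0 s - (2 * h - k - 2) / 2) h k ((k + 1) / 2) 1 :=
  hasShape_single (by omega) (by omega) (by omega)

theorem hasShape_of_F2 {s h : ℕ} (hh₁ : q0 s + 1 ≤ h) (hh₂ : h ≤ 2 * q0 s) :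
    HasShape (q0 s) (qS s) (h * qS s - (2 * h - 2 * q0 s - 1) * q0 s - (q0 s - 1)) h
      (2 * h - 2 * q0 s - 1) ((2 * h - 2 * q0 s - 1 + 1) / 2) 1 :=
  hasShape_single (by omega) (by omega) (by omega)

theorem exists_hasShape_of_mem {s g : ℕ} (hg : g ∈ G1 s ∪ F2 s) :
    ∃ a k c, HasShape (q0 s) (qS s) g a k c 1 := by
  rcases hg with ⟨h, k, hh₁, hh₂, hk, rfl⟩ | ⟨h, hh₁, hh₂, rfl⟩
  · exact ⟨_, _, _, hasShape_of_G1 hh₁ hh₂ hk⟩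
  · exact ⟨_, _, _, hasShape_of_F2 hh₁ hh₂⟩

theorem stmt13_general (s : ℕ) (h k : ℕ)
    (hh₁ : 1 ≤ h) (hh₂ : h ≤ q0 s) (hk : k ≤ 2 * h - 2) :
    h * qS s - k * q0 s - (2 * h - k - 2) / 2 ∉
      AddSubmonoid.closure
        ((G1 s ∪ F2 s) \ {h * qS s - k * q0 s - (2 * h - k - 2) / 2}) := by
  intro hmem
  have hν := hasShape_of_G1 hh₁ hh₂ hk
  obtain ⟨l, hl, hsum⟩ := AddSubmonoid.exists_multiset_of_mem_closure hmem
  obtain ⟨a, k', c, hsum_shape⟩ :=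
    hasShape_multiset_sum fun g hg => exists_hasShape_of_mem (hl g hg).1
  rw [hsum] at hsum_shape
  rcases Nat.le_one_iff_eq_zero_or_eq_one.mp (hsum_shape.count_le_one hν hh₂ le_rfl) with h0 | h1
  · rw [Multiset.card_eq_zero.mp h0, Multiset.sum_zero] at hsum
    have := hν.mul_lt_add hh₂ le_rfl
    rw [← hsum] at this
    nlinarith
  · obtain ⟨g, rfl⟩ := Multiset.card_eq_one.mp h1
    rw [Multiset.sum_singleton] at hsum
    exact (hl g (Multiset.mem_singleton_self g)).2 hsum

/-- No `ν_{h,k} ∈ G₁` belongs to the submonoid generated by `(G₁ ∪ F₂) \ {ν_{h,k}}`. -/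
theorem stmt13 (s : ℕ) (hs : 1 ≤ s) (h k : ℕ)
    (hh₁ : 1 ≤ h) (hh₂ : h ≤ q0 s) (hk : k ≤ 2 * h - 2) :
    h * qS s - k * q0 s - (2 * h - k - 2) / 2 ∉
      AddSubmonoid.closure
        ((G1 s ∪ F2 s) \ {h * qS s - k * q0 s - (2 * h - k - 2) / 2}) :=
  stmt13_general s h k hh₁ hh₂ hk
end

section
/- For every h ∈ {q_0+1,…,2q_0}, the element μ_h = hq − (2h−2q_0−1)q_0 − (q_0−1) of F_2 does not belong to the additive submonoid of ℕ generated by G ∖ {μ_h}, where G = G_1 ∪ F_2. -/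
theorem Nat.cast_sub_sub {R : Type*} [AddCommGroupWithOne R] {n a b : ℕ} (h : a + b ≤ n) :
    ((n - a - b : ℕ) : R) = n - a - b := by
  rw [Nat.sub_sub, Nat.cast_sub h, Nat.cast_add, sub_sub]

section Arithmetic

variable {Q h a b L₁ L₂ K R x y : ℤ}

/-- `x` is a sum of `a` elements `ν_{ℓ,k}` of `G₁` and `b` elements `μ_ℓ ≠ μ_h` of `F₂`: `L₁`, `K`
and `R` total `ℓ`, `k` and `⌊(2ℓ−k−2)/2⌋` over the `G₁` summands, `L₂` totals `ℓ` over the `F₂`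
summands. Only the constraints on these totals that the argument uses are kept. -/
def IsSumAvoidingMu (Q h x : ℤ) : Prop :=
  ∃ a b L₁ L₂ K R : ℤ, 0 ≤ a ∧ 0 ≤ b ∧ 0 ≤ K ∧ 0 ≤ R ∧
    L₁ ≤ a * Q ∧ K + 2 * R + 2 * a ≤ 2 * L₁ ∧
    (Q + 1) * b ≤ L₂ ∧ L₂ ≤ 2 * Q * b ∧ (b = 1 → L₂ ≠ h) ∧
    x = 2 * Q ^ 2 * (L₁ + L₂) - K * Q - R - 2 * Q * L₂ + b * (2 * Q ^ 2 + 1)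

theorem isSumAvoidingMu_zero : IsSumAvoidingMu Q h 0 :=
  ⟨0, 0, 0, 0, 0, 0, le_rfl, le_rfl, le_rfl, le_rfl, by simp, by simp, by simp, by simp,
    by simp, by ring⟩

theorem IsSumAvoidingMu.add (hx : IsSumAvoidingMu Q h x) (hy : IsSumAvoidingMu Q h y) :
    IsSumAvoidingMu Q h (x + y) := by
  obtain ⟨a, b, L₁, L₂, K, R, ha, hb, hK, hR, hL₁, hKR, hlo, hhi, hne, rfl⟩ := hx
  obtain ⟨a', b', L₁', L₂', K', R', ha', hb', hK', hR', hL₁', hKR', hlo', hhi', hne', rfl⟩ := hy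
  refine ⟨a + a', b + b', L₁ + L₁', L₂ + L₂', K + K', R + R', by omega, by omega, by omega,
    by omega, by linarith, by linarith, by linarith, by linarith, fun hb1 => ?_, by ring⟩
  rcases (by omega : b = 1 ∧ b' = 0 ∨ b = 0 ∧ b' = 1) with ⟨rfl, rfl⟩ | ⟨rfl, rfl⟩
  · have : L₂' = 0 := by linarith
    simpa [this] using hne rfl
  · have : L₂ = 0 := by linarith
    simpa [this] using hne' rfl

theorem mul_add_ne_of_two_le (hQ : 2 ≤ Q) (ha : 2 ≤ a) (hR : 0 ≤ R)
    (hKR : K + 2 * R + 2 * a ≤ 2 * h) : K * Q + R ≠ 2 * h * Q - 2 * Q ^ 2 - 1 := by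
  intro heq
  -- `R ≡ -1 (mod Q)` forces `R ≥ Q - 1`, more than `2R ≤ 2h - K - 2a` allows
  obtain ⟨m, hm⟩ : ∃ m, R + 1 = Q * m := ⟨2 * h - 2 * Q - K, by linarith⟩
  have hm1 : 1 ≤ m := by nlinarith
  nlinarith [mul_nonneg (by linarith : (0 : ℤ) ≤ 2 * Q - 1) (by linarith : (0 : ℤ) ≤ m - 1)]

theorem not_isSumAvoidingMu_mu (hQ : 2 ≤ Q) (h₁ : Q + 1 ≤ h) (h₂ : h ≤ 2 * Q) :
    ¬ IsSumAvoidingMu Q h (2 * Q ^ 2 * h - 2 * Q * h + 2 * Q ^ 2 + 1) := by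
  rintro ⟨a, b, L₁, L₂, K, R, ha, hb, hK, hR, hL₁, hKR, hL₂, hL₂', hne, hx⟩
  have hlevel : h ≤ L₁ + L₂ := by
    have : 2 * Q ^ 2 * (h - 1) < 2 * Q ^ 2 * (L₁ + L₂) := by
      nlinarith [mul_le_mul_of_nonneg_left hL₂ (by linarith : (0 : ℤ) ≤ 2 * Q)]
    linarith [lt_of_mul_lt_mul_left this (by positivity)]
  have hbound :
      (L₁ + L₂ - h) * (2 * Q ^ 2 - 2 * Q) + 2 * Q * a + (b - 1) * (2 * Q ^ 2 + 1) ≤ 0 := by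
    nlinarith [mul_le_mul_of_nonneg_left hKR (by linarith : (0 : ℤ) ≤ Q)]
  have hexcess : 0 ≤ (L₁ + L₂ - h) * (2 * Q ^ 2 - 2 * Q) :=
    mul_nonneg (by linarith) (by nlinarith)
  obtain rfl | rfl : b = 0 ∨ b = 1 := by
    have : b - 1 ≤ 0 := by nlinarith
    omega
  · have hL₂0 : L₂ = 0 := by linarith
    subst hL₂0
    have ha2 : 2 ≤ a := by nlinarith
    have hL₁h : L₁ = h := by nlinarith
    subst hL₁h
    exact mul_add_ne_of_two_le hQ ha2 hR hKR (by linarith)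
  · have ha0 : a = 0 := by nlinarith
    subst ha0
    exact hne rfl (by nlinarith)

end Arithmetic

theorem one_le_q0 (s : ℕ) : 1 ≤ q0 s := Nat.one_le_two_pow

def mu (s h : ℕ) : ℕ := h * qS s - (2 * h - 2 * q0 s - 1) * q0 s - (q0 s - 1)

def nu (s h k : ℕ) : ℕ := h * qS s - k * q0 s - (2 * h - k - 2) / 2

theorem natCast_mu (s : ℕ) {h : ℕ} (h₁ : q0 s + 1 ≤ h) (h₂ : h ≤ 2 * q0 s) :
    (mu s h : ℤ) = 2 * (q0 s : ℤ) ^ 2 * h - 2 * q0 s * h + 2 * q0 s ^ 2 + 1 := by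
  have hk : ((2 * h - 2 * q0 s - 1 : ℕ) : ℤ) = 2 * h - 2 * q0 s - 1 := by omega
  have hj : ((q0 s - 1 : ℕ) : ℤ) = q0 s - 1 := by have := one_le_q0 s; omega
  have hle : (2 * h - 2 * q0 s - 1) * q0 s + (q0 s - 1) ≤ h * qS s := by
    have hk' := Nat.mul_le_mul_right (q0 s) (by omega : 2 * h - 2 * q0 s - 1 + 1 ≤ 2 * q0 s)
    have hh := Nat.mul_le_mul_right (2 * q0 s ^ 2) (by omega : 1 ≤ h)
    unfold qS
    nlinarith [Nat.sub_le (q0 s) 1]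
  rw [mu, Nat.cast_sub_sub hle]
  push_cast [hk, hj, qS]
  ring

theorem natCast_nu (s : ℕ) {h k : ℕ} (h₁ : 1 ≤ h) (h₂ : h ≤ q0 s) (hk : k ≤ 2 * h - 2) :
    (nu s h k : ℤ) =
      2 * (q0 s : ℤ) ^ 2 * h - k * q0 s - ((2 * h - k - 2) / 2 : ℕ) := by
  have hle : k * q0 s + (2 * h - k - 2) / 2 ≤ h * qS s := by
    have hr : (2 * h - k - 2) / 2 ≤ q0 s := by omega
    have hk' := Nat.mul_le_mul_right (q0 s) (by omega : k + 2 ≤ 2 * h)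
    have hQ := Nat.mul_le_mul_left h (Nat.le_self_pow two_ne_zero (q0 s))
    unfold qS
    nlinarith
  rw [nu, Nat.cast_sub_sub hle]
  push_cast [qS]
  ring

section Generators

variable {s h n : ℕ}

theorem isSumAvoidingMu_of_mem_G1 (hn : n ∈ G1 s) : IsSumAvoidingMu (q0 s) h n := by
  obtain ⟨ℓ, k, hℓ₁, hℓ₂, hk, rfl⟩ :
    ∃ ℓ k, 1 ≤ ℓ ∧ ℓ ≤ q0 s ∧ k ≤ 2 * ℓ - 2 ∧ n = nu s ℓ k := hn
  refine ⟨1, 0, ℓ, 0, k, ((2 * ℓ - k - 2) / 2 : ℕ), zero_le_one, le_rfl, by positivity,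
    by positivity, by simpa using hℓ₂, by omega, by simp, by simp, by simp, ?_⟩
  rw [natCast_nu s hℓ₁ hℓ₂ hk]
  ring

theorem isSumAvoidingMu_of_mem_F2 (hn : n ∈ F2 s) (hne : n ≠ mu s h) :
    IsSumAvoidingMu (q0 s) h n := by
  obtain ⟨ℓ, hℓ₁, hℓ₂, rfl⟩ : ∃ ℓ, q0 s + 1 ≤ ℓ ∧ ℓ ≤ 2 * q0 s ∧ n = mu s ℓ := hn
  refine ⟨0, 1, 0, ℓ, 0, 0, le_rfl, zero_le_one, le_rfl, le_rfl, by simp, by simp,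
    by exact_mod_cast by omega, by exact_mod_cast by omega, fun _ hℓ => hne ?_, ?_⟩
  · rw [Nat.cast_inj.mp hℓ]
  · rw [natCast_mu s hℓ₁ hℓ₂]
    ring

theorem isSumAvoidingMu_of_mem_closure
    (hx : n ∈ AddSubmonoid.closure ((G1 s ∪ F2 s) \ {mu s h})) :
    IsSumAvoidingMu (q0 s) h n := by
  induction hx using AddSubmonoid.closure_induction with
  | mem y hy =>
    obtain ⟨hG1 | hF2, hne⟩ := hy
    · exact isSumAvoidingMu_of_mem_G1 hG1
    · exact isSumAvoidingMu_of_mem_F2 hF2 hne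
  | zero => exact isSumAvoidingMu_zero
  | add y z _ _ hy hz => exact_mod_cast hy.add hz

end Generators

/-- No `μ_h ∈ F₂` belongs to the submonoid generated by `(G₁ ∪ F₂) \ {μ_h}`. -/
theorem stmt14 (s : ℕ) (hs : 1 ≤ s) (h : ℕ)
    (hh₁ : q0 s + 1 ≤ h) (hh₂ : h ≤ 2 * q0 s) :
    h * qS s - (2 * h - 2 * q0 s - 1) * q0 s - (q0 s - 1) ∉
      AddSubmonoid.closure
        ((G1 s ∪ F2 s) \ {h * qS s - (2 * h - 2 * q0 s - 1) * q0 s - (q0 s - 1)}) := by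
  have hQ : 2 ≤ (q0 s : ℤ) := by exact_mod_cast Nat.pow_le_pow_right two_pos hs
  intro hmem
  have hsum : IsSumAvoidingMu (q0 s) h (mu s h) := isSumAvoidingMu_of_mem_closure hmem
  rw [natCast_mu s hh₁ hh₂] at hsum
  exact not_isSumAvoidingMu_mu hQ (by exact_mod_cast hh₁) (by exact_mod_cast hh₂) hsum
end
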